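/- arXiv:2508.17572 — 8 statements merged into one kernel-verified Lean document; each statement's English description precedes it below -/
import Mathlib

section
/- Let $v_0, v_1$ be coprime integers with $2 \le v_0 < v_1$, and let $G = \{\delta \in \mathbb{N} : \delta > 0 \text{ and } \delta \notin \langle v_0, v_1\rangle\}$. The map $F(i,j) = (i+1)v_0 + (j+1)v_1 - v_0 v_1$ is an injection from the rectangle $\{0, \dots, v_1-2\} \times \{0, \dots, v_0-2\}$ into $\mathbb{Z}$, its image never contains $0$, and its image equals $\{\delta : \delta \in G\} \cup \{-\delta : \delta \in G\}$. In particular $F$ is a bijection from the rectangle onto $G \cup (-G)$. -/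
lemma aux_coprime_int (v0 v1 : ℕ) (hcop : Nat.Coprime v0 v1) :
    IsCoprime (v1 : ℤ) (v0 : ℤ) := by
  rw [Int.isCoprime_iff_gcd_eq_one]
  simpa [Int.gcd_natCast_natCast] using hcop.symm

lemma aux_not_mem (v0 v1 : ℕ) (h0 : 0 < v0) (hcop : Nat.Coprime v0 v1) (a c : ℤ)
    (ha1 : 1 ≤ a) (ha2 : a ≤ (v1:ℤ) - 1) (hc1 : 1 ≤ c) (δ : ℕ)
    (hδ : (δ:ℤ) = a * v0 - c * v1) :
    δ ∉ AddSubmonoid.closure ({v0, v1} : Set ℕ) := by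
  intro hmem
  rw [AddSubmonoid.mem_closure_pair] at hmem
  obtain ⟨x, y, hxy⟩ := hmem
  simp only [smul_eq_mul] at hxy
  have hxy' : ((x:ℤ)) * v0 + (y:ℤ) * v1 = (δ:ℤ) := by exact_mod_cast hxy
  have key : (a - x) * v0 = (c + y) * v1 := by ring_nf; ring_nf at hδ hxy'; linarith
  have hdvd : (v1:ℤ) ∣ a - x :=
    (aux_coprime_int v0 v1 hcop).dvd_of_dvd_mul_right ⟨c + y, by linarith [key]⟩
  have hv0 : (0:ℤ) < v0 := by exact_mod_cast h0
  have hv1 : (0:ℤ) < v1 := by linarith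
  have hy : (0:ℤ) ≤ y := Int.natCast_nonneg y
  have hx : (0:ℤ) ≤ x := Int.natCast_nonneg x
  have hpos : 0 < a - x := by nlinarith
  have := Int.le_of_dvd hpos hdvd
  linarith

lemma aux_rep (v0 v1 : ℕ) (h2 : 2 ≤ v0) (hlt : v0 < v1) (hcop : Nat.Coprime v0 v1)
    (δ : ℕ) (hpos : 0 < δ) (hgap : δ ∉ AddSubmonoid.closure ({v0, v1} : Set ℕ)) :
    ∃ a c : ℤ, 1 ≤ a ∧ a ≤ (v1:ℤ) - 1 ∧ 1 ≤ c ∧ c ≤ (v0:ℤ) - 1 ∧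
      (δ:ℤ) = a * v0 - c * v1 := by
  obtain ⟨u, w, huw⟩ := (aux_coprime_int v0 v1 hcop).symm
  have hv1 : (0:ℤ) < v1 := by exact_mod_cast Nat.lt_of_lt_of_le Nat.zero_lt_two (le_trans h2 hlt.le)
  have hv0 : (0:ℤ) < v0 := by exact_mod_cast Nat.lt_of_lt_of_le Nat.zero_lt_two h2
  set q := ((δ:ℤ) * u) / v1 with hq
  set a := ((δ:ℤ) * u) % v1 with ha
  have hdiv : (δ:ℤ) * u = v1 * q + a := (Int.mul_ediv_add_emod _ _).symm
  have ha0 : 0 ≤ a := Int.emod_nonneg _ (by linarith)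
  have haup : a < v1 := Int.emod_lt_of_pos _ hv1
  set c := -((δ:ℤ) * w + q * v0) with hc
  have hrep : (δ:ℤ) = a * v0 - c * v1 := by
    have : (δ:ℤ) * (u * v0 + w * v1) = (δ:ℤ) := by rw [huw]; ring
    rw [hc]; nlinarith [hdiv]
  have hc1 : 1 ≤ c := by
    by_contra hcle
    push_neg at hcle
    have hcle' : 0 ≤ -c := by linarith
    apply hgap
    rw [AddSubmonoid.mem_closure_pair]
    refine ⟨a.toNat, (-c).toNat, ?_⟩
    simp only [smul_eq_mul]
    have : ((a.toNat * v0 + (-c).toNat * v1 : ℕ) : ℤ) = (δ:ℤ) := by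
      push_cast [Int.toNat_of_nonneg ha0, Int.toNat_of_nonneg hcle']
      linarith [hrep]
    exact_mod_cast this
  have ha1 : 1 ≤ a := by nlinarith [hrep]
  have hcup : c ≤ (v0:ℤ) - 1 := by nlinarith [hrep]
  exact ⟨a, c, ha1, by linarith, hc1, hcup, hrep⟩

/-- The map `F(i,j) = (i+1)v₀ + (j+1)v₁ - v₀v₁` is injective on the rectangle
`{0,…,v₁-2} × {0,…,v₀-2}`, never takes the value `0` there, and its image is exactly
`G ∪ (-G)` where `G` is the set of positive gaps of `⟨v₀, v₁⟩`; in particular it is a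
bijection from the rectangle onto `G ∪ (-G)`. -/
theorem spectral_map_bijection (v0 v1 : ℕ) (h2 : 2 ≤ v0) (hlt : v0 < v1)
    (hcop : Nat.Coprime v0 v1)
    (G : Set ℕ)
    (hG : G = {δ : ℕ | 0 < δ ∧ δ ∉ AddSubmonoid.closure ({v0, v1} : Set ℕ)})
    (F : ℕ × ℕ → ℤ)
    (hF : ∀ p : ℕ × ℕ,
      F p = ((p.1 : ℤ) + 1) * (v0 : ℤ) + ((p.2 : ℤ) + 1) * (v1 : ℤ) - (v0 : ℤ) * (v1 : ℤ))
    (R : Set (ℕ × ℕ)) (hR : R = {p : ℕ × ℕ | p.1 ≤ v1 - 2 ∧ p.2 ≤ v0 - 2}) :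
    Set.InjOn F R ∧ (∀ p ∈ R, F p ≠ 0) ∧
      F '' R = {z : ℤ | ∃ δ ∈ G, z = (δ : ℤ) ∨ z = -(δ : ℤ)} ∧
      Set.BijOn F R {z : ℤ | ∃ δ ∈ G, z = (δ : ℤ) ∨ z = -(δ : ℤ)} := by
  have hv0 : (0:ℤ) < v0 := by exact_mod_cast Nat.lt_of_lt_of_le Nat.zero_lt_two h2
  have hv1 : (0:ℤ) < v1 := by exact_mod_cast Nat.lt_of_lt_of_le Nat.zero_lt_two (le_trans h2 hlt.le)
  have hv1' : 2 ≤ v1 := le_trans h2 hlt.le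
  -- bound extraction
  have hbnd : ∀ p ∈ R, (p.1:ℤ) ≤ (v1:ℤ) - 2 ∧ (p.2:ℤ) ≤ (v0:ℤ) - 2 := by
    intro p hp
    rw [hR] at hp
    obtain ⟨hp1, hp2⟩ := hp
    constructor <;> omega
  -- injectivity
  have hinj : Set.InjOn F R := by
    intro p hp q hq hpq
    rw [hF p, hF q] at hpq
    have key : ((p.1:ℤ) - q.1) * v0 = ((q.2:ℤ) - p.2) * v1 := by ring_nf; ring_nf at hpq; linarith
    have hdvd : (v1:ℤ) ∣ (p.1:ℤ) - q.1 :=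
      (aux_coprime_int v0 v1 hcop).dvd_of_dvd_mul_right ⟨(q.2:ℤ) - p.2, by linarith [key]⟩
    obtain ⟨k, hk⟩ := hdvd
    obtain ⟨hb1, _⟩ := hbnd p hp
    obtain ⟨hb2, _⟩ := hbnd q hq
    have hq1 : (0:ℤ) ≤ (q.1:ℤ) := Int.natCast_nonneg _
    have hp1 : (0:ℤ) ≤ (p.1:ℤ) := Int.natCast_nonneg _
    have hk0 : k = 0 := by nlinarith [hk]
    have h1 : (p.1:ℤ) = q.1 := by rw [hk0] at hk; linarith
    have h2' : (p.2:ℤ) = q.2 := by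
      rw [h1] at key
      have : ((q.2:ℤ) - p.2) * v1 = 0 := by linarith
      have := mul_eq_zero.mp this
      rcases this with h | h
      · linarith
      · linarith
    have e1 : p.1 = q.1 := by exact_mod_cast h1
    have e2 : p.2 = q.2 := by exact_mod_cast h2'
    exact Prod.ext e1 e2
  -- nonvanishing
  have hne : ∀ p ∈ R, F p ≠ 0 := by
    intro p hp h0
    obtain ⟨hb1, hb2⟩ := hbnd p hp
    have : (0:ℕ) ∉ AddSubmonoid.closure ({v0, v1} : Set ℕ) := by
      apply aux_not_mem v0 v1 (by omega) hcop ((p.1:ℤ) + 1) ((v0:ℤ) - 1 - p.2)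
      · have : (0:ℤ) ≤ (p.1:ℤ) := Int.natCast_nonneg _
        linarith
      · linarith
      · linarith
      · push_cast
        rw [hF p] at h0
        linarith
    exact this (AddSubmonoid.zero_mem _)
  -- image
  have himg : F '' R = {z : ℤ | ∃ δ ∈ G, z = (δ : ℤ) ∨ z = -(δ : ℤ)} := by
    ext z
    constructor
    · rintro ⟨p, hp, rfl⟩
      obtain ⟨hb1, hb2⟩ := hbnd p hp
      have hp1 : (0:ℤ) ≤ (p.1:ℤ) := Int.natCast_nonneg _
      have hp2 : (0:ℤ) ≤ (p.2:ℤ) := Int.natCast_nonneg _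
      rcases lt_trichotomy (F p) 0 with hlt' | heq | hgt
      · refine ⟨(-F p).toNat, ?_, Or.inr ?_⟩
        · rw [hG]
          refine ⟨by omega, ?_⟩
          apply aux_not_mem v0 v1 (by omega) hcop ((v1:ℤ) - 1 - p.1) ((p.2:ℤ) + 1)
          · linarith
          · linarith
          · linarith
          · rw [Int.toNat_of_nonneg (by linarith), hF p]; ring
        · rw [Int.toNat_of_nonneg (by linarith)]; ring
      · exact absurd heq (hne p hp)
      · refine ⟨(F p).toNat, ?_, Or.inl ?_⟩
        · rw [hG]
          refine ⟨by omega, ?_⟩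
          apply aux_not_mem v0 v1 (by omega) hcop ((p.1:ℤ) + 1) ((v0:ℤ) - 1 - p.2)
          · linarith
          · linarith
          · linarith
          · rw [Int.toNat_of_nonneg (by linarith), hF p]; ring
        · rw [Int.toNat_of_nonneg (by linarith)]
    · rintro ⟨δ, hδG, hz⟩
      rw [hG] at hδG
      obtain ⟨hδpos, hδgap⟩ := hδG
      obtain ⟨a, c, ha1, ha2, hc1, hc2, hrep⟩ := aux_rep v0 v1 h2 hlt hcop δ hδpos hδgap
      rcases hz with rfl | rfl
      · refine ⟨(a.toNat - 1, v0 - 1 - c.toNat), ?_, ?_⟩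
        · rw [hR]
          constructor <;> simp <;> omega
        · rw [hF]
          simp only
          have e1 : ((a.toNat - 1 : ℕ) : ℤ) = a - 1 := by omega
          have e2 : ((v0 - 1 - c.toNat : ℕ) : ℤ) = (v0:ℤ) - 1 - c := by omega
          rw [e1, e2, hrep]; ring
      · refine ⟨(v1 - 1 - a.toNat, c.toNat - 1), ?_, ?_⟩
        · rw [hR]
          constructor <;> simp <;> omega
        · rw [hF]
          simp only
          have e1 : ((v1 - 1 - a.toNat : ℕ) : ℤ) = (v1:ℤ) - 1 - a := by omega
          have e2 : ((c.toNat - 1 : ℕ) : ℤ) = c - 1 := by omega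
          rw [e1, e2, hrep]; ring
  exact ⟨hinj, hne, himg, himg ▸ hinj.bijOn_image⟩
end

section
/- Let $v_0, v_1$ be coprime integers with $2 \le v_0 < v_1$, let $s$ be an integer with $1 \le s \le \lfloor v_1/v_0 \rfloor + 1$, and set $\lambda = (v_0 - 1)v_1 - s v_0 \in \mathbb{Z}$. Then $\{\delta \in \mathbb{Z} : \delta > \lambda,\ \delta > 0,\ \delta \notin \langle v_0, v_1\rangle\} = \{(v_0 - 1)v_1 - j v_0 : j \in \mathbb{N},\ 1 \le j \le s - 1\}$. In particular, every integer greater than $\lambda$ that is not in $\langle v_0, v_1\rangle$ is of the form $\lambda + (s-j)v_0$ with $1 \le j \le s-1$. -/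
set_option maxHeartbeats 1600000 in
/-- For `λ = (v₀-1)v₁ - s v₀` with `1 ≤ s ≤ ⌊v₁/v₀⌋ + 1`, the positive gaps of
`⟨v₀, v₁⟩` greater than `λ` are exactly `(v₀-1)v₁ - j v₀` for `1 ≤ j ≤ s-1`;
in particular every integer `> λ` not in `⟨v₀, v₁⟩` is `λ + (s-j)v₀` with
`1 ≤ j ≤ s-1`. -/
theorem gaps_above_lambda (v0 v1 : ℕ) (h2 : 2 ≤ v0) (hlt : v0 < v1)
    (hcop : Nat.Coprime v0 v1) (s : ℕ) (hs1 : 1 ≤ s) (hs2 : s ≤ v1 / v0 + 1)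
    (lam : ℤ) (hlam : lam = ((v0 : ℤ) - 1) * (v1 : ℤ) - (s : ℤ) * (v0 : ℤ)) :
    ({δ : ℤ | lam < δ ∧ 0 < δ ∧
        ∀ n ∈ AddSubmonoid.closure ({v0, v1} : Set ℕ), (n : ℤ) ≠ δ} =
      {z : ℤ | ∃ j : ℕ, 1 ≤ j ∧ j ≤ s - 1 ∧
        z = ((v0 : ℤ) - 1) * (v1 : ℤ) - (j : ℤ) * (v0 : ℤ)}) ∧
      ∀ δ : ℤ, lam < δ →
        (∀ n ∈ AddSubmonoid.closure ({v0, v1} : Set ℕ), (n : ℤ) ≠ δ) →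
        ∃ j : ℕ, 1 ≤ j ∧ j ≤ s - 1 ∧ δ = lam + ((s : ℤ) - (j : ℤ)) * (v0 : ℤ) := by
  subst hlam
  have hv0 : (0:ℤ) < v0 := by exact_mod_cast Nat.lt_of_lt_of_le Nat.zero_lt_two h2
  have hv02 : (2:ℤ) ≤ v0 := by exact_mod_cast h2
  have hv1 : (v0:ℤ) < v1 := by exact_mod_cast hlt
  have hndvd : ¬ v0 ∣ v1 := by
    intro h
    have h1 : v0 ∣ Nat.gcd v0 v1 := Nat.dvd_gcd dvd_rfl h
    rw [hcop] at h1
    have := Nat.le_of_dvd Nat.one_pos h1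
    omega
  have hmod : 1 ≤ v1 % v0 := by
    rcases Nat.eq_zero_or_pos (v1 % v0) with h | h
    · exact absurd (Nat.dvd_of_mod_eq_zero h) hndvd
    · exact h
  have hdivmod : v0 * (v1 / v0) + v1 % v0 = v1 := Nat.div_add_mod v1 v0
  -- s * v0 ≤ v1 - 1 + v0 over ℕ
  have hsv0n : s * v0 ≤ v1 - 1 + v0 := by
    have h1 : s * v0 ≤ (v1 / v0 + 1) * v0 := Nat.mul_le_mul_right _ hs2
    have h2' : (v1 / v0 + 1) * v0 = v0 * (v1 / v0) + v0 := by ring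
    omega
  have hsv0 : (s:ℤ) * v0 ≤ (v1:ℤ) - 1 + v0 := by
    have : ((s * v0 : ℕ) : ℤ) ≤ ((v1 - 1 + v0 : ℕ) : ℤ) := by exact_mod_cast hsv0n
    push_cast [Nat.cast_sub (by omega : 1 ≤ v1)] at this
    linarith
  -- for j ≤ s - 1, j * v0 < v1
  have hjlt : ∀ j : ℕ, j ≤ s - 1 → (j:ℤ) * v0 < v1 := by
    intro j hj
    have h1 : j ≤ v1 / v0 := by omega
    have h2' : j * v0 ≤ v1 / v0 * v0 := Nat.mul_le_mul_right _ h1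
    have h3' : v1 / v0 * v0 = v0 * (v1 / v0) := Nat.mul_comm _ _
    have : j * v0 < v1 := by omega
    exact_mod_cast this
  have hcopZ : IsCoprime (v0:ℤ) (v1:ℤ) := Nat.isCoprime_iff_coprime.mpr hcop
  -- Lemma A: the candidates are gaps
  have hgap : ∀ j : ℕ, 1 ≤ j →
      ∀ n ∈ AddSubmonoid.closure ({v0, v1} : Set ℕ),
        (n : ℤ) ≠ ((v0:ℤ) - 1) * v1 - (j:ℤ) * v0 := by
    intro j hj n hn hne
    obtain ⟨a, b, hab⟩ := (AddSubmonoid.mem_closure_pair v0 v1 n).1 hn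
    simp only [smul_eq_mul] at hab
    have habZ : (a:ℤ) * v0 + (b:ℤ) * v1 = ((v0:ℤ) - 1) * v1 - (j:ℤ) * v0 := by
      rw [← hne]; push_cast [← hab]; ring
    set c : ℤ := (v0:ℤ) - 1 - b with hc
    have hcv : c * v1 = ((a:ℤ) + j) * v0 := by rw [hc]; linarith
    have hdvd : (v0:ℤ) ∣ c := by
      refine hcopZ.dvd_of_dvd_mul_right ?_
      exact ⟨(a:ℤ) + j, by linarith [hcv]⟩
    have hcpos : 0 < c := by
      have h1 : 0 < ((a:ℤ) + j) * v0 := by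
        have : (0:ℤ) < (a:ℤ) + j := by positivity
        positivity
      nlinarith
    have hcge : (v0:ℤ) ≤ c := Int.le_of_dvd hcpos hdvd
    have : c ≤ (v0:ℤ) - 1 := by
      have : (0:ℤ) ≤ b := Int.natCast_nonneg b
      linarith
    linarith
  -- Lemma B: classification of gaps above lam
  have hclass : ∀ δ : ℤ, ((v0:ℤ) - 1) * v1 - (s:ℤ) * v0 < δ → 0 < δ →
      (∀ n ∈ AddSubmonoid.closure ({v0, v1} : Set ℕ), (n : ℤ) ≠ δ) →
      ∃ j : ℕ, 1 ≤ j ∧ j ≤ s - 1 ∧ δ = ((v0:ℤ) - 1) * v1 - (j:ℤ) * v0 := by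
    intro δ hδlam hδpos hδgap
    -- Bézout
    obtain ⟨x, y, hbez⟩ : ∃ x y : ℤ, (v0:ℤ) * x + (v1:ℤ) * y = 1 := by
      refine ⟨Nat.gcdA v0 v1, Nat.gcdB v0 v1, ?_⟩
      have := Nat.gcd_eq_gcd_ab v0 v1
      rw [hcop] at this
      exact_mod_cast this.symm
    obtain ⟨b, hb0, hblt, k, hk⟩ :
        ∃ b : ℤ, 0 ≤ b ∧ b < v0 ∧ ∃ k : ℤ, δ * y - b = v0 * k := by
      refine ⟨(δ * y) % v0, Int.emod_nonneg _ (by positivity),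
        Int.emod_lt_of_pos _ hv0, ?_⟩
      exact Int.dvd_self_sub_of_emod_eq rfl
    obtain ⟨t, ht⟩ : ∃ t : ℤ, t = δ * x + v1 * k := ⟨_, rfl⟩
    have h2'' : δ * y = b + v0 * k := by linarith
    have hδeq : δ = b * v1 + t * v0 := by
      rw [ht]; linear_combination (-δ) * hbez + (v1:ℤ) * h2'' 
    by_cases htpos : 0 ≤ t
    · -- δ is in the monoid: contradiction
      exfalso
      have hmem : (t.toNat * v0 + b.toNat * v1 : ℕ) ∈
          AddSubmonoid.closure ({v0, v1} : Set ℕ) := by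
        refine (AddSubmonoid.mem_closure_pair v0 v1 _).2 ⟨t.toNat, b.toNat, ?_⟩
        simp only [smul_eq_mul]
      refine hδgap _ hmem ?_
      push_cast [Int.toNat_of_nonneg htpos, Int.toNat_of_nonneg hb0]
      linarith [hδeq]
    · -- t < 0 : δ = b*v1 - j*v0
      push_neg at htpos
      set j : ℕ := (-t).toNat with hj
      have hjval : (j:ℤ) = -t := Int.toNat_of_nonneg (by linarith)
      have hj1 : 1 ≤ j := by
        have : (1:ℤ) ≤ (j:ℤ) := by rw [hjval]; linarith
        exact_mod_cast this
      have hδeq' : δ = b * v1 - (j:ℤ) * v0 := by rw [hjval]; linarith [hδeq]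
      -- b must be v0 - 1
      have hbge : (v0:ℤ) - 1 ≤ b := by
        by_contra hblt2
        push_neg at hblt2
        have hble : b ≤ (v0:ℤ) - 2 := by linarith
        have : δ ≤ ((v0:ℤ) - 2) * v1 - v0 := by
          have h1 : b * v1 ≤ ((v0:ℤ) - 2) * v1 := by nlinarith
          have h2' : (v0:ℤ) ≤ (j:ℤ) * v0 := by
            have : (1:ℤ) ≤ (j:ℤ) := by exact_mod_cast hj1
            nlinarith
          linarith [hδeq']
        nlinarith [hsv0, hδlam]
      have hbeq : b = (v0:ℤ) - 1 := le_antisymm (by linarith) hbge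
      have hδfin : δ = ((v0:ℤ) - 1) * v1 - (j:ℤ) * v0 := by rw [hδeq', hbeq]
      have hjs : j ≤ s - 1 := by
        have : (j:ℤ) * v0 < (s:ℤ) * v0 := by linarith [hδlam, hδfin]
        have hjlt' : (j:ℤ) < s := lt_of_mul_lt_mul_right (by linarith) (le_of_lt hv0)
        have : j < s := by exact_mod_cast hjlt'
        omega
      exact ⟨j, hj1, hjs, hδfin⟩
  constructor
  · ext δ
    simp only [Set.mem_setOf_eq]
    constructor
    · rintro ⟨h1, h2', h3⟩
      exact hclass δ h1 h2' h3
    · rintro ⟨j, hj1, hjs, rfl⟩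
      have hpos : 0 < ((v0:ℤ) - 1) * v1 - (j:ℤ) * v0 := by
        have h1 := hjlt j hjs
        nlinarith
      refine ⟨?_, hpos, hgap j hj1⟩
      have : (j:ℤ) < s := by
        have : j < s := by omega
        exact_mod_cast this
      nlinarith
  · intro δ hδlam hδgap
    -- first show δ > 0
    have hlamge : (-1:ℤ) ≤ ((v0:ℤ) - 1) * v1 - (s:ℤ) * v0 := by nlinarith
    have hδpos : 0 < δ := by
      rcases lt_or_ge 0 δ with h | h
      · exact h
      · have hδ0 : δ = 0 := by omega
        exfalso
        refine hδgap 0 (AddSubmonoid.zero_mem _) ?_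
        simp [hδ0]
    obtain ⟨j, hj1, hjs, hδeq⟩ := hclass δ hδlam hδpos hδgap
    refine ⟨j, hj1, hjs, ?_⟩
    rw [hδeq]; ring
end

section
/- Let $v_0, v_1$ be coprime integers with $2 \le v_0 < v_1$, and let $r, s$ be integers with $2 \le r \le v_0 - 2$, $s \ge 1$, and $r v_1 > s v_0$. Then there exists an integer $k \ge 1$ such that $r v_1 - s v_0 < (v_0 - 1) v_1 - k v_0 < r v_1 - s v_0 + v_0$ and $(v_0 - 1) v_1 - k v_0 \notin \langle v_0, v_1 \rangle$. -/
/-- For coprime `2 ≤ v₀ < v₁` and integers `2 ≤ r ≤ v₀ - 2`, `s ≥ 1` with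
`r v₁ > s v₀`, there is `k ≥ 1` with
`r v₁ - s v₀ < (v₀-1)v₁ - k v₀ < r v₁ - s v₀ + v₀` and `(v₀-1)v₁ - k v₀ ∉ ⟨v₀, v₁⟩`. -/
theorem gap_exists_case_r (v0 v1 : ℕ) (h2 : 2 ≤ v0) (hlt : v0 < v1)
    (hcop : Nat.Coprime v0 v1) (r s : ℤ) (hr1 : 2 ≤ r) (hr2 : r ≤ (v0 : ℤ) - 2)
    (hs : 1 ≤ s) (hrs : s * (v0 : ℤ) < r * (v1 : ℤ)) :
    ∃ k : ℤ, 1 ≤ k ∧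
      r * (v1 : ℤ) - s * (v0 : ℤ) < ((v0 : ℤ) - 1) * (v1 : ℤ) - k * (v0 : ℤ) ∧
      ((v0 : ℤ) - 1) * (v1 : ℤ) - k * (v0 : ℤ) < r * (v1 : ℤ) - s * (v0 : ℤ) + (v0 : ℤ) ∧
      ∀ n ∈ AddSubmonoid.closure ({v0, v1} : Set ℕ),
        (n : ℤ) ≠ ((v0 : ℤ) - 1) * (v1 : ℤ) - k * (v0 : ℤ) := by
  have hv0 : (0 : ℤ) < (v0 : ℤ) := by exact_mod_cast Nat.lt_of_lt_of_le Nat.zero_lt_two h2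
  set A : ℤ := ((v0 : ℤ) - 1) * v1 - (r * v1 - s * v0) with hA
  have hAeq : A = ((v0 : ℤ) - 1 - r) * v1 + s * v0 := by ring
  -- coprimality in ℤ
  have hcopZ : IsCoprime (v0 : ℤ) (v1 : ℤ) := by
    rw [Int.isCoprime_iff_gcd_eq_one]
    exact_mod_cast hcop
  -- A not divisible by v0
  have hndvd : ¬ ((v0 : ℤ) ∣ A) := by
    intro hd
    have hd' : (v0 : ℤ) ∣ ((v0 : ℤ) - 1 - r) * v1 := by
      have : ((v0 : ℤ) - 1 - r) * v1 = A - s * v0 := by rw [hAeq]; ring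
      rw [this]; exact dvd_sub hd ⟨s, by ring⟩
    have hd2 : (v0 : ℤ) ∣ ((v0 : ℤ) - 1 - r) := hcopZ.dvd_of_dvd_mul_right hd'
    have h1 : (0 : ℤ) < (v0 : ℤ) - 1 - r := by linarith
    have h2' : (v0 : ℤ) - 1 - r < v0 := by linarith
    have := Int.le_of_dvd h1 hd2
    linarith
  set k : ℤ := A / v0 with hk
  have hmod : A % v0 = A - k * v0 := by rw [hk, Int.emod_def]; ring
  have hmod_pos : 0 < A % v0 := by
    rcases lt_or_eq_of_le (Int.emod_nonneg A (ne_of_gt hv0)) with h | h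
    · exact h
    · exact absurd (Int.dvd_of_emod_eq_zero h.symm) hndvd
  have hmod_lt : A % v0 < v0 := Int.emod_lt_of_pos A hv0
  have hlo : A - v0 < k * v0 := by linarith [hmod]
  have hhi : k * v0 < A := by linarith [hmod]
  have hv1 : (0 : ℤ) < (v1 : ℤ) := by exact_mod_cast Nat.lt_of_le_of_lt (Nat.zero_le _) hlt
  have hA_big : (v1 : ℤ) ≤ A - v0 := by
    rw [hAeq]
    have h1 : (1 : ℤ) ≤ (v0 : ℤ) - 1 - r := by linarith
    nlinarith
  have hk1 : 1 ≤ k := by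
    by_contra h
    push_neg at h
    have : k ≤ 0 := by linarith
    have : k * v0 ≤ 0 := mul_nonpos_of_nonpos_of_nonneg this (le_of_lt hv0)
    linarith
  refine ⟨k, hk1, by linarith, by linarith, ?_⟩
  intro n hn hne
  rw [AddSubmonoid.mem_closure_pair] at hn
  obtain ⟨a, b, hab⟩ := hn
  simp only [smul_eq_mul] at hab
  -- n = a*v0 + b*v1 and n = (v0-1)*v1 - k*v0
  have habZ : (a : ℤ) * v0 + (b : ℤ) * v1 = ((v0 : ℤ) - 1) * v1 - k * v0 := by
    have h0 : ((a * v0 + b * v1 : ℕ) : ℤ) = ((v0 : ℤ) - 1) * v1 - k * v0 := by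
      rw [hab]; exact hne
    push_cast at h0
    linarith
  -- mod v0: v0 ∣ (b+1)*v1
  have hd : (v0 : ℤ) ∣ ((b : ℤ) + 1) * v1 := by
    have : ((b : ℤ) + 1) * v1 = ((v0 : ℤ) * v1 - k * v0 - a * v0) := by linarith [habZ]
    rw [this]
    exact dvd_sub (dvd_sub ⟨v1, rfl⟩ ⟨k, by ring⟩) ⟨a, by ring⟩
  have hdb : (v0 : ℤ) ∣ ((b : ℤ) + 1) := hcopZ.dvd_of_dvd_mul_right hd
  have hb : (v0 : ℤ) ≤ (b : ℤ) + 1 := Int.le_of_dvd (by positivity) hdb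
  -- then n ≥ (v0-1)*v1 but n < (v0-1)*v1
  have : ((v0 : ℤ) - 1) * v1 ≤ (b : ℤ) * v1 := by nlinarith
  have hkv : (0 : ℤ) < k * v0 := mul_pos (by linarith) hv0
  have han : (0 : ℤ) ≤ (a : ℤ) * v0 := mul_nonneg (Int.ofNat_nonneg a) (le_of_lt hv0)
  linarith
end

section
/- Let $v_0, v_1$ be coprime integers with $2 \le v_0 < v_1$, and let $s$ be a natural number with $s v_0 > v_1 + v_0$ and $s v_0 < (v_0 - 1) v_1$. Then there exists an integer $k \ge 1$ such that $(v_0 - 1)v_1 - s v_0 < (v_0 - 2)v_1 - k v_0 < (v_0 - 1)v_1 - (s - 1)v_0$ and $(v_0 - 2)v_1 - k v_0 \notin \langle v_0, v_1\rangle$. -/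
/-!
Write `v₁ = q v₀ + e` with `1 ≤ e < v₀` (coprimality and `v₀ ≥ 2` rule out `e = 0`) and take
`k = s - q - 1`, so that `(v₀-2)v₁ - k v₀ = ((v₀-1)v₁ - s v₀) + (v₀ - e)` lies strictly between
the two bounds, and `k ≥ 1` is `s v₀ > v₁ + v₀`. It is a gap because every `m v₁ - k v₀` with
`m < v₀` and `k > 0` is: in `a v₀ + b v₁ = m v₁ - k v₀` we would have `v₀ ∣ m - b` with
`0 < m - b < v₀`.
-/

theorem Nat.Coprime.natCast_ne_mul_sub_mul_of_mem_closure_pair {v0 v1 : ℕ}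
    (hcop : Nat.Coprime v0 v1) (hv0 : 0 < v0) {m k : ℤ} (hm : m < v0) (hk : 0 < k) :
    ∀ n ∈ AddSubmonoid.closure ({v0, v1} : Set ℕ), (n : ℤ) ≠ m * v1 - k * v0 := by
  intro n hn heq
  obtain ⟨a, b, rfl⟩ := (AddSubmonoid.mem_closure_pair v0 v1 n).mp hn
  simp only [smul_eq_mul, Nat.cast_add, Nat.cast_mul] at heq
  have hrel : (m - b) * v1 = (a + k) * v0 := by linear_combination -heq
  have hpos : 0 < m - b := by
    by_contra! hle
    nlinarith [mul_nonpos_of_nonpos_of_nonneg hle (Int.natCast_nonneg v1)]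
  have hdvd : (v0 : ℤ) ∣ m - b :=
    (Nat.isCoprime_iff_coprime.mpr hcop).dvd_of_dvd_mul_right ⟨a + k, by linear_combination hrel⟩
  have := Int.le_of_dvd hpos hdvd
  omega

theorem gap_exists_case_s_general (v0 v1 : ℕ) (h2 : 2 ≤ v0)
    (hcop : Nat.Coprime v0 v1) (s : ℕ)
    (hs1 : (v1 : ℤ) + (v0 : ℤ) < (s : ℤ) * (v0 : ℤ)) :
    ∃ k : ℤ, 1 ≤ k ∧
      ((v0 : ℤ) - 1) * (v1 : ℤ) - (s : ℤ) * (v0 : ℤ) <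
        ((v0 : ℤ) - 2) * (v1 : ℤ) - k * (v0 : ℤ) ∧
      ((v0 : ℤ) - 2) * (v1 : ℤ) - k * (v0 : ℤ) <
        ((v0 : ℤ) - 1) * (v1 : ℤ) - ((s : ℤ) - 1) * (v0 : ℤ) ∧
      ∀ n ∈ AddSubmonoid.closure ({v0, v1} : Set ℕ),
        (n : ℤ) ≠ ((v0 : ℤ) - 2) * (v1 : ℤ) - k * (v0 : ℤ) := by
  set q := v1 / v0
  set e := v1 % v0
  have he_pos : 0 < e := Nat.pos_of_ne_zero fun h => by
    have := hcop.eq_one_of_dvd (Nat.dvd_of_mod_eq_zero h)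
    omega
  have he_lt : e < v0 := Nat.mod_lt _ (by omega)
  have hdiv : (v0 : ℤ) * q + e = v1 := by exact_mod_cast Nat.div_add_mod v1 v0
  have hk : (q : ℤ) + 1 < s :=
    lt_of_mul_lt_mul_right (a := (v0 : ℤ)) (by linarith) (by positivity)
  refine ⟨s - q - 1, by omega, by linarith, by linarith, ?_⟩
  exact hcop.natCast_ne_mul_sub_mul_of_mem_closure_pair (by omega) (by omega) (by omega)

/-- For coprime `2 ≤ v₀ < v₁` and a natural number `s` with
`v₁ + v₀ < s v₀ < (v₀-1) v₁`, there is `k ≥ 1` with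
`(v₀-1)v₁ - s v₀ < (v₀-2)v₁ - k v₀ < (v₀-1)v₁ - (s-1)v₀` and
`(v₀-2)v₁ - k v₀ ∉ ⟨v₀, v₁⟩`. -/
theorem gap_exists_case_s (v0 v1 : ℕ) (h2 : 2 ≤ v0) (hlt : v0 < v1)
    (hcop : Nat.Coprime v0 v1) (s : ℕ)
    (hs1 : (v1 : ℤ) + (v0 : ℤ) < (s : ℤ) * (v0 : ℤ))
    (hs2 : (s : ℤ) * (v0 : ℤ) < ((v0 : ℤ) - 1) * (v1 : ℤ)) :
    ∃ k : ℤ, 1 ≤ k ∧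
      ((v0 : ℤ) - 1) * (v1 : ℤ) - (s : ℤ) * (v0 : ℤ) <
        ((v0 : ℤ) - 2) * (v1 : ℤ) - k * (v0 : ℤ) ∧
      ((v0 : ℤ) - 2) * (v1 : ℤ) - k * (v0 : ℤ) <
        ((v0 : ℤ) - 1) * (v1 : ℤ) - ((s : ℤ) - 1) * (v0 : ℤ) ∧
      ∀ n ∈ AddSubmonoid.closure ({v0, v1} : Set ℕ),
        (n : ℤ) ≠ ((v0 : ℤ) - 2) * (v1 : ℤ) - k * (v0 : ℤ) :=
  gap_exists_case_s_general v0 v1 h2 hcop s hs1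
end

section
/- Let $e \ge 3$ and $v_2$ be natural numbers with $\gcd(e, v_2) = 1$ and $v_2 > 6e$. Then there exists an integer $k \ge 1$ such that $v_2 - e < 2 v_2 - 2 e k < v_2 + e$ and $2 v_2 - 2 e k \notin \langle 2e, 3e, v_2 \rangle$. -/
/-!
Write `m = 2v₂ - 2ek`. The open interval `(v₂ - e, v₂ + e)` has length `2e`, and its endpoints are
not multiples of `2e` because `e ∤ v₂`, so it contains some `2ek`; then `v₂ - e < m < v₂ + e` and
`k ≥ 1` since `v₂ > e`. Every element of `⟨2e, 3e, v₂⟩` below `2v₂` is `≡ 0` or `≡ v₂ (mod e)`,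
whereas `m ≡ 2v₂`, which is neither because `e ≥ 3` is coprime to `v₂`.
-/

lemma Int.exists_two_mul_mul_mem_Ioo {e v : ℤ} (he : 0 < e) (hv : ¬ e ∣ v) :
    ∃ k : ℤ, v - e < 2 * e * k ∧ 2 * e * k < v + e := by
  have h2e : 0 < 2 * e := by omega
  refine ⟨(v + e) / (2 * e), ?_, ?_⟩
  · linarith [Int.lt_ediv_add_one_mul_self (v + e) h2e]
  · refine lt_of_le_of_ne (Int.mul_ediv_self_le h2e.ne') fun heq => hv ?_
    exact dvd_add_self_right.mp ⟨2 * ((v + e) / (2 * e)), by linear_combination -heq⟩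

lemma AddSubmonoid.closure_two_mul_three_mul_le (e v : ℕ) :
    closure ({2 * e, 3 * e, v} : Set ℕ) ≤ closure {e, v} := by
  have he : e ∈ closure ({e, v} : Set ℕ) := subset_closure (by simp)
  rw [closure_le]
  rintro x (rfl | rfl | rfl)
  · simpa using nsmul_mem he 2
  · simpa using nsmul_mem he 3
  · exact subset_closure (by simp)

lemma AddSubmonoid.notMem_closure_pair_of_lt_two_mul {e v m : ℕ} (hlt : m < 2 * v)
    (h0 : ¬ (e : ℤ) ∣ m) (h1 : ¬ (e : ℤ) ∣ m - v) : m ∉ closure ({e, v} : Set ℕ) := by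
  rw [mem_closure_pair]
  rintro ⟨a, b, rfl⟩
  rcases b with _ | _ | b
  · exact h0 ⟨a, by push_cast [smul_eq_mul]; ring⟩
  · exact h1 ⟨a, by push_cast [smul_eq_mul]; ring⟩
  · simp only [smul_eq_mul] at hlt
    nlinarith

/-- For `e ≥ 3`, `gcd(e, v₂) = 1` and `v₂ > 6e`, there is `k ≥ 1` with
`v₂ - e < 2v₂ - 2ek < v₂ + e` and `2v₂ - 2ek ∉ ⟨2e, 3e, v₂⟩`. -/
theorem gap_exists_case_e (e v2 : ℕ) (he : 3 ≤ e) (hcop : Nat.gcd e v2 = 1)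
    (hv2 : 6 * e < v2) :
    ∃ k : ℤ, 1 ≤ k ∧
      (v2 : ℤ) - (e : ℤ) < 2 * (v2 : ℤ) - 2 * (e : ℤ) * k ∧
      2 * (v2 : ℤ) - 2 * (e : ℤ) * k < (v2 : ℤ) + (e : ℤ) ∧
      ∀ n ∈ AddSubmonoid.closure ({2 * e, 3 * e, v2} : Set ℕ),
        (n : ℤ) ≠ 2 * (v2 : ℤ) - 2 * (e : ℤ) * k := by
  have hcop' : Nat.Coprime e v2 := hcop
  have hv : ¬ (e : ℤ) ∣ v2 := fun h => by
    have := hcop'.eq_one_of_dvd (Int.natCast_dvd_natCast.mp h)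
    omega
  have h2v : ¬ (e : ℤ) ∣ 2 * v2 := fun h => by
    have := Nat.le_of_dvd two_pos <|
      hcop'.dvd_of_dvd_mul_right (Int.natCast_dvd_natCast.mp (by exact_mod_cast h))
    omega
  obtain ⟨k, hlow, hup⟩ := Int.exists_two_mul_mul_mem_Ioo (by omega : (0 : ℤ) < e) hv
  have hk : 1 ≤ k := by
    by_contra! hk
    nlinarith
  refine ⟨k, hk, by linarith, by linarith, fun n hn heq => ?_⟩
  refine AddSubmonoid.notMem_closure_pair_of_lt_two_mul (by nlinarith [heq]) (fun h => h2v ?_)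
    (fun h => hv ?_) (AddSubmonoid.closure_two_mul_three_mul_le e v2 hn)
  · have := dvd_add h (dvd_mul_right (e : ℤ) (2 * k))
    rwa [heq, show 2 * (v2 : ℤ) - 2 * e * k + e * (2 * k) = 2 * v2 by ring] at this
  · have := dvd_add h (dvd_mul_right (e : ℤ) (2 * k))
    rwa [heq, show 2 * (v2 : ℤ) - 2 * e * k - v2 + e * (2 * k) = v2 by ring] at this
end

section
/- Let $\varphi_1 = T^4$ and $\varphi_2 = T^6 + \sum_{i \ge 7} a_i T^i$ in $\mathbb{C}[[T]]$ with $a_i \in \mathbb{C}$, let $\Gamma$ be the value semigroup and $\Lambda$ the value set of differentials of $(\varphi_1, \varphi_2)$, and assume that $\Gamma = \langle 4, 6, v_2 \rangle$ for some odd integer $v_2 > 12$. Then $\Lambda \setminus \Gamma = \{v_2 - 2,\ v_2 + 2\}$. -/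
open PowerSeries

/-- Substitution of two one-variable power series (with zero constant term) into a
two-variable power series, defined coefficientwise. -/
noncomputable def sub2 (φ₁ φ₂ : PowerSeries ℂ) (h : MvPowerSeries (Fin 2) ℂ) :
    PowerSeries ℂ :=
  PowerSeries.mk fun n =>
    ∑ p ∈ Finset.range (n + 1) ×ˢ Finset.range (n + 1),
      MvPowerSeries.coeff (Finsupp.single 0 p.1 + Finsupp.single 1 p.2) h *
        PowerSeries.coeff n (φ₁ ^ p.1 * φ₂ ^ p.2)

/-- The value semigroup of a parameterization `(φ₁, φ₂)`. -/
noncomputable def valueSemigroup (φ₁ φ₂ : PowerSeries ℂ) : Set ℕ :=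
  {n : ℕ | ∃ h : MvPowerSeries (Fin 2) ℂ,
    sub2 φ₁ φ₂ h ≠ 0 ∧ (sub2 φ₁ φ₂ h).order = (n : ℕ∞)}

/-- The value set of differentials of a parameterization `(φ₁, φ₂)`. -/
noncomputable def diffValues (φ₁ φ₂ : PowerSeries ℂ) : Set ℕ :=
  {n : ℕ | ∃ A B : MvPowerSeries (Fin 2) ℂ,
    sub2 φ₁ φ₂ A * derivativeFun φ₁ + sub2 φ₁ φ₂ B * derivativeFun φ₂ ≠ 0 ∧
    (sub2 φ₁ φ₂ A * derivativeFun φ₁ + sub2 φ₁ φ₂ B * derivativeFun φ₂).order + 1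
      = (n : ℕ∞)}

/-!
Let `β` be the first odd exponent of `φ₂ = T⁶ + ⋯`. Counting parities of coefficients, no
`h(T⁴, φ₂)` has odd terms below `T^β`, and the monomial `T^{4i} φ₂^j` has none below
`T^{β + 4i + 6j - 6}`. Hence `β ≤ v₂`; the coefficients of `T^β` and `T^{β+2}` in `h(T⁴, φ₂)` are
multiples of its `T⁶`-coefficient, so `v₂ ∉ {β, β + 2}`; and `φ₂² - T¹²`, with its even terms
cleared by monomials, has order `β + 6`, which lies in `⟨4, 6, v₂⟩` only if `v₂ = β + 6`.

For `ω = f d(T⁴) + g dφ₂` the same count applied to `T ω` shows that an even order of `ω` is at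
least `β + 3` (when `g(0) ≠ 0`, the `T⁵`-coefficient `6 g(0)` rules out an even order), and
`T³ ∣ ω`. The forms `2 T^{4s+4} dφ₂ - 3 T^{4s} φ₂ d(T⁴) = 2 T^{4s+3} (T φ₂' - 6 φ₂)`, with their
odd terms cleared by the exact forms `d(T^{4i} φ₂^j)`, have orders `β + 3` and `β + 7` for
`s = 0, 1`, giving `v₂ - 2` and `v₂ + 2`; every other candidate lies in `⟨4, 6, v₂⟩`.
-/

namespace PowerSeries

section OddVanish

variable {R : Type*} [CommSemiring R]

def OddVanishBelow (k : ℕ) (f : R⟦X⟧) : Prop :=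
  ∀ n < k, Odd n → coeff n f = 0

variable {k k₁ k₂ a b : ℕ} {f g : R⟦X⟧}

theorem OddVanishBelow.mono (hf : OddVanishBelow k f) {k' : ℕ} (hk : k' ≤ k) :
    OddVanishBelow k' f :=
  fun n hn => hf n (hn.trans_le hk)

theorem OddVanishBelow.add (hf : OddVanishBelow k f) (hg : OddVanishBelow k g) :
    OddVanishBelow k (f + g) :=
  fun n hn hodd => by rw [map_add, hf n hn hodd, hg n hn hodd, add_zero]

theorem OddVanishBelow.nsmul (hf : OddVanishBelow k f) (c : ℕ) : OddVanishBelow k (c • f) :=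
  fun n hn hodd => by rw [map_nsmul, hf n hn hodd, smul_zero]

theorem oddVanishBelow_X_pow {m : ℕ} (hm : Even m) (k : ℕ) :
    OddVanishBelow k (X ^ m : R⟦X⟧) := by
  rintro n - hn
  rw [coeff_X_pow, if_neg]
  rintro rfl
  exact Nat.not_even_iff_odd.mpr hn hm

theorem OddVanishBelow.mul (hf : OddVanishBelow k₁ f) (hg : OddVanishBelow k₂ g)
    (ha : X ^ a ∣ f) (hb : X ^ b ∣ g) (h₁ : k ≤ k₁ + b) (h₂ : k ≤ k₂ + a) :
    OddVanishBelow k (f * g) := by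
  intro n hn hodd
  rw [coeff_mul]
  refine Finset.sum_eq_zero fun ⟨p, q⟩ hpq => ?_
  obtain rfl : p + q = n := Finset.HasAntidiagonal.mem_antidiagonal.mp hpq
  -- the odd one of `p`, `q` lies below its bound, or else the other one lies below its order
  rcases Nat.even_or_odd p with hp | hp
  · by_cases hq₂ : q < k₂
    · rw [hg q hq₂ ((Nat.odd_add'.mp hodd).mpr hp), mul_zero]
    · rw [X_pow_dvd_iff.mp ha p (by omega), zero_mul]
  · by_cases hp₁ : p < k₁
    · rw [hf p hp₁ hp, zero_mul]
    · rw [X_pow_dvd_iff.mp hb q (by omega), mul_zero]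

theorem coeff_X_mul_derivative (f : R⟦X⟧) (n : ℕ) :
    coeff n (X * d⁄dX R f) = n * coeff n f := by
  cases n with
  | zero => simp
  | succ n => rw [coeff_succ_X_mul, coeff_derivative, mul_comm]; push_cast; rfl

theorem X_pow_dvd_derivative (hf : X ^ (a + 1) ∣ f) : X ^ a ∣ d⁄dX R f :=
  X_pow_dvd_iff.mpr fun n hn => by
    rw [coeff_derivative, X_pow_dvd_iff.mp hf (n + 1) (by omega), zero_mul]

theorem OddVanishBelow.X_mul_derivative (hf : OddVanishBelow k f) :
    OddVanishBelow k (X * d⁄dX R f) :=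
  fun n hn hodd => by rw [coeff_X_mul_derivative, hf n hn hodd, mul_zero]

theorem X_pow_dvd_X_mul_derivative (hf : X ^ a ∣ f) : X ^ a ∣ X * d⁄dX R f :=
  X_pow_dvd_iff.mpr fun n hn => by rw [coeff_X_mul_derivative, X_pow_dvd_iff.mp hf n hn, mul_zero]

end OddVanish

section OddVanishRing

variable {R : Type*} [CommRing R] {k : ℕ} {f g : R⟦X⟧}

theorem OddVanishBelow.sub (hf : OddVanishBelow k f) (hg : OddVanishBelow k g) :
    OddVanishBelow k (f - g) :=
  fun n hn hodd => by rw [map_sub, hf n hn hodd, hg n hn hodd, sub_zero]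

theorem coeff_X_mul_derivative_sub_nsmul (f : R⟦X⟧) (c n : ℕ) :
    coeff n (X * d⁄dX R f - c • f) = (n - c) * coeff n f := by
  rw [map_sub, coeff_X_mul_derivative, map_nsmul, nsmul_eq_mul, sub_mul]

end OddVanishRing

section Elimination

variable {K : Type*} [Field K]

/-- Subtracting a multiple of the `g` attached to the first nonzero coefficient below `t` clears it,
without disturbing the lower ones, the positions where `P` holds, or the coefficient at `t`. -/
theorem exists_mem_order_eq (S : Submodule K K⟦X⟧) {t : ℕ} (P : ℕ → Prop) {f₀ : K⟦X⟧}
    (hf₀ : f₀ ∈ S) (hf₀P : ∀ n < t, P n → coeff n f₀ = 0) (ht : coeff t f₀ ≠ 0)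
    (hcorr : ∀ m < t, ¬ P m → ∃ g ∈ S, coeff m g ≠ 0 ∧ (∀ n < m, coeff n g = 0) ∧
      (∀ n < t, P n → coeff n g = 0) ∧ coeff t g = 0) :
    ∃ f ∈ S, f.order = t := by
  suffices ∀ m ≤ t, ∃ f ∈ S, (∀ n < m, coeff n f = 0) ∧ (∀ n < t, P n → coeff n f = 0) ∧
      coeff t f = coeff t f₀ by
    obtain ⟨f, hfS, hlt, -, hft⟩ := this t le_rfl
    exact ⟨f, hfS, order_eq_nat.mpr ⟨hft ▸ ht, hlt⟩⟩
  intro m hm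
  induction m with
  | zero => exact ⟨f₀, hf₀, fun n hn => absurd hn n.not_lt_zero, hf₀P, rfl⟩
  | succ m ih =>
    obtain ⟨f, hfS, hlt, hP, hft⟩ := ih (by omega)
    by_cases hfm : coeff m f = 0
    · exact ⟨f, hfS, fun n hn => (Nat.lt_succ_iff_lt_or_eq.mp hn).elim (hlt n) (· ▸ hfm), hP, hft⟩
    obtain ⟨g, hgS, hgm, hglt, hgP, hgt⟩ := hcorr m (by omega) fun h => hfm (hP m (by omega) h)
    refine ⟨f - (coeff m f / coeff m g) • g, S.sub_mem hfS (S.smul_mem _ hgS), fun n hn => ?_,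
      fun n hn hPn => ?_, ?_⟩
    all_goals simp only [map_sub, coeff_smul, smul_eq_mul]
    · rcases Nat.lt_succ_iff_lt_or_eq.mp hn with hn | rfl
      · rw [hlt n hn, hglt n hn, mul_zero, sub_zero]
      · rw [div_mul_cancel₀ _ hgm, sub_self]
    · rw [hP n hn hPn, hgP n hn hPn, mul_zero, sub_zero]
    · rw [hgt, mul_zero, sub_zero, hft]

end Elimination

end PowerSeries

section Substitution

variable (φ₁ φ₂ : ℂ⟦X⟧)

noncomputable def sub2Linear : MvPowerSeries (Fin 2) ℂ →ₗ[ℂ] ℂ⟦X⟧ where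
  toFun := sub2 φ₁ φ₂
  map_add' A B := by
    ext n
    simp only [sub2, coeff_mk, map_add, add_mul, Finset.sum_add_distrib]
  map_smul' c A := by
    ext n
    simp only [sub2, coeff_mk, MvPowerSeries.coeff_smul, coeff_smul, smul_eq_mul, Finset.mul_sum,
      mul_assoc, RingHom.id_apply]

noncomputable def sub2Range : Submodule ℂ ℂ⟦X⟧ :=
  LinearMap.range (sub2Linear φ₁ φ₂)

/-- The pullbacks `A(φ₁, φ₂) dφ₁ + B(φ₁, φ₂) dφ₂` of differentials, as multiples of `dT`. -/
noncomputable def pullbackForms : Submodule ℂ ℂ⟦X⟧ :=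
  (sub2Range φ₁ φ₂).map (LinearMap.mulRight ℂ (d⁄dX ℂ φ₁)) ⊔
    (sub2Range φ₁ φ₂).map (LinearMap.mulRight ℂ (d⁄dX ℂ φ₂))

variable {φ₁ φ₂}

theorem mem_valueSemigroup_iff {n : ℕ} :
    n ∈ valueSemigroup φ₁ φ₂ ↔ ∃ f ∈ sub2Range φ₁ φ₂, f.order = n := by
  constructor
  · rintro ⟨h, -, hord⟩
    exact ⟨_, ⟨h, rfl⟩, hord⟩
  · rintro ⟨_, ⟨h, rfl⟩, hord⟩
    exact ⟨h, fun h0 => by simp [sub2Linear, h0] at hord, hord⟩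

theorem mem_pullbackForms_iff {ω : ℂ⟦X⟧} : ω ∈ pullbackForms φ₁ φ₂ ↔
    ∃ f ∈ sub2Range φ₁ φ₂, ∃ g ∈ sub2Range φ₁ φ₂, f * d⁄dX ℂ φ₁ + g * d⁄dX ℂ φ₂ = ω := by
  simp only [pullbackForms, Submodule.mem_sup, Submodule.mem_map, LinearMap.mulRight_apply]
  constructor
  · rintro ⟨_, ⟨f, hf, rfl⟩, _, ⟨g, hg, rfl⟩, rfl⟩
    exact ⟨f, hf, g, hg, rfl⟩
  · rintro ⟨f, hf, g, hg, rfl⟩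
    exact ⟨_, ⟨f, hf, rfl⟩, _, ⟨g, hg, rfl⟩, rfl⟩

theorem mem_diffValues_iff {n : ℕ} :
    n ∈ diffValues φ₁ φ₂ ↔ ∃ ω ∈ pullbackForms φ₁ φ₂, ∃ m : ℕ, ω.order = m ∧ n = m + 1 := by
  constructor
  · rintro ⟨A, B, hne, hord⟩
    obtain ⟨m, hm⟩ := ENat.ne_top_iff_exists.mp (mt order_eq_top.mp hne)
    rw [← hm] at hord
    exact ⟨_, mem_pullbackForms_iff.mpr ⟨_, ⟨A, rfl⟩, _, ⟨B, rfl⟩, rfl⟩, m, hm.symm,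
      by exact_mod_cast hord.symm⟩
  · rintro ⟨_, hω, m, hm, rfl⟩
    obtain ⟨_, ⟨A, rfl⟩, _, ⟨B, rfl⟩, rfl⟩ := mem_pullbackForms_iff.mp hω
    exact ⟨A, B, fun h0 => ENat.natCast_ne_top m (hm.symm.trans (order_eq_top.mpr h0)),
      (congrArg (· + 1) hm).trans (by push_cast; rfl)⟩

end Substitution

section ZeroConstantCoeff

open Finsupp in
theorem single_zero_add_single_one_inj {i j i' j' : ℕ} :
    single (0 : Fin 2) i + single 1 j = single 0 i' + single 1 j' ↔ i = i' ∧ j = j' := by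
  refine ⟨fun h => ⟨?_, ?_⟩, fun ⟨hi, hj⟩ => hi ▸ hj ▸ rfl⟩
  · simpa using DFunLike.congr_fun h 0
  · simpa using DFunLike.congr_fun h 1

variable {φ₁ φ₂ : ℂ⟦X⟧}

theorem X_pow_add_dvd_pow_mul_pow (h₁ : constantCoeff φ₁ = 0) (h₂ : constantCoeff φ₂ = 0)
    (i j : ℕ) : X ^ (i + j) ∣ φ₁ ^ i * φ₂ ^ j := by
  rw [pow_add]
  exact mul_dvd_mul (pow_dvd_pow_of_dvd (X_dvd_iff.mpr h₁) i)
    (pow_dvd_pow_of_dvd (X_dvd_iff.mpr h₂) j)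

theorem coeff_sub2_eq_sum (h₁ : constantCoeff φ₁ = 0) (h₂ : constantCoeff φ₂ = 0)
    (A : MvPowerSeries (Fin 2) ℂ) {n N : ℕ} (hN : n ≤ N) :
    coeff n (sub2 φ₁ φ₂ A) = ∑ p ∈ Finset.range (N + 1) ×ˢ Finset.range (N + 1),
      MvPowerSeries.coeff (Finsupp.single 0 p.1 + Finsupp.single 1 p.2) A *
        coeff n (φ₁ ^ p.1 * φ₂ ^ p.2) := by
  have hsub : Finset.range (n + 1) ⊆ Finset.range (N + 1) :=
    Finset.range_subset_range.mpr (by omega)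
  rw [sub2, coeff_mk]
  refine Finset.sum_subset (Finset.product_subset_product hsub hsub) fun p _ hp => ?_
  rw [X_pow_dvd_iff.mp (X_pow_add_dvd_pow_mul_pow h₁ h₂ p.1 p.2) n ?_, mul_zero]
  simp only [Finset.mem_product, Finset.mem_range, not_and_or, not_lt] at hp
  omega

theorem coeff_eq_mul_coeff_of_mem_sub2Range (h₁ : constantCoeff φ₁ = 0)
    (h₂ : constantCoeff φ₂ = 0) {n n' : ℕ} {c : ℂ}
    (h : ∀ i j, coeff n (φ₁ ^ i * φ₂ ^ j) = c * coeff n' (φ₁ ^ i * φ₂ ^ j)) {f : ℂ⟦X⟧}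
    (hf : f ∈ sub2Range φ₁ φ₂) : coeff n f = c * coeff n' f := by
  obtain ⟨A, rfl⟩ := hf
  change coeff n (sub2 φ₁ φ₂ A) = c * coeff n' (sub2 φ₁ φ₂ A)
  rw [coeff_sub2_eq_sum h₁ h₂ A (le_max_left n n'), coeff_sub2_eq_sum h₁ h₂ A (le_max_right n n'),
    Finset.mul_sum]
  exact Finset.sum_congr rfl fun p _ => by rw [h, mul_left_comm]

theorem coeff_eq_zero_of_mem_sub2Range (h₁ : constantCoeff φ₁ = 0) (h₂ : constantCoeff φ₂ = 0)
    {n : ℕ} (h : ∀ i j, coeff n (φ₁ ^ i * φ₂ ^ j) = 0) {f : ℂ⟦X⟧} (hf : f ∈ sub2Range φ₁ φ₂) :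
    coeff n f = 0 := by
  simpa using coeff_eq_mul_coeff_of_mem_sub2Range h₁ h₂ (n' := n) (c := 0) (by simpa using h) hf

theorem sub2_monomial (h₁ : constantCoeff φ₁ = 0) (h₂ : constantCoeff φ₂ = 0) (i j : ℕ) (c : ℂ) :
    sub2 φ₁ φ₂ (MvPowerSeries.monomial (Finsupp.single 0 i + Finsupp.single 1 j) c) =
      c • (φ₁ ^ i * φ₂ ^ j) := by
  ext n
  rw [coeff_sub2_eq_sum h₁ h₂ _ (Nat.le_add_right n (i + j)), Finset.sum_eq_single (i, j)]
  · simp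
  · rintro ⟨p, q⟩ - hpq
    rw [MvPowerSeries.coeff_monomial, if_neg (mt single_zero_add_single_one_inj.mp ?_), zero_mul]
    rintro ⟨rfl, rfl⟩
    exact hpq rfl
  · simp only [Finset.mem_product, Finset.mem_range]
    omega

theorem pow_mul_pow_mem_sub2Range (h₁ : constantCoeff φ₁ = 0) (h₂ : constantCoeff φ₂ = 0)
    (i j : ℕ) : φ₁ ^ i * φ₂ ^ j ∈ sub2Range φ₁ φ₂ :=
  ⟨MvPowerSeries.monomial (Finsupp.single 0 i + Finsupp.single 1 j) 1,
    (sub2_monomial h₁ h₂ i j 1).trans (one_smul ℂ _)⟩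

theorem derivative_pow_mul_pow_mem_pullbackForms (h₁ : constantCoeff φ₁ = 0)
    (h₂ : constantCoeff φ₂ = 0) (i j : ℕ) : d⁄dX ℂ (φ₁ ^ i * φ₂ ^ j) ∈ pullbackForms φ₁ φ₂ := by
  have hd : d⁄dX ℂ (φ₁ ^ i * φ₂ ^ j) = ((i : ℂ) • (φ₁ ^ (i - 1) * φ₂ ^ j)) * d⁄dX ℂ φ₁ +
      ((j : ℂ) • (φ₁ ^ i * φ₂ ^ (j - 1))) * d⁄dX ℂ φ₂ := by
    rw [Derivation.leibniz, derivative_pow, derivative_pow, smul_eq_mul, smul_eq_mul,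
      Nat.cast_smul_eq_nsmul, Nat.cast_smul_eq_nsmul, nsmul_eq_mul, nsmul_eq_mul]
    ring
  rw [hd]
  exact Submodule.add_mem_sup
    (Submodule.mem_map_of_mem (Submodule.smul_mem _ _ (pow_mul_pow_mem_sub2Range h₁ h₂ _ _)))
    (Submodule.mem_map_of_mem (Submodule.smul_mem _ _ (pow_mul_pow_mem_sub2Range h₁ h₂ _ _)))

end ZeroConstantCoeff

theorem exists_eq_four_mul_add_six_mul {m : ℕ} (hm : Even m) (h2 : m ≠ 2) :
    ∃ i j, m = 4 * i + 6 * j := by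
  obtain ⟨r, rfl⟩ := hm
  rcases Nat.even_or_odd r with ⟨s, rfl⟩ | ⟨s, rfl⟩
  · exact ⟨s, 0, by ring⟩
  · exact ⟨s - 1, 1, by omega⟩

theorem mem_closure_four_six_iff {v : ℕ} (hv : Odd v) (hv₁ : 1 < v) {n : ℕ} :
    n ∈ AddSubmonoid.closure ({4, 6, v} : Set ℕ) ↔
      Even n ∧ n ≠ 2 ∨ Odd n ∧ v ≤ n ∧ n ≠ v + 2 := by
  rw [Nat.odd_iff] at hv
  constructor
  · intro hn
    induction hn using AddSubmonoid.closure_induction with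
    | mem x hx =>
      simp only [Set.mem_insert_iff, Set.mem_singleton_iff] at hx
      simp only [Nat.even_iff, Nat.odd_iff]
      omega
    | zero => exact Or.inl ⟨Even.zero, by omega⟩
    | add x y _ _ hx hy =>
      simp only [Nat.even_iff, Nat.odd_iff] at hx hy ⊢
      omega
  · have hgen : ∀ x ∈ ({4, 6, v} : Set ℕ), x ∈ AddSubmonoid.closure ({4, 6, v} : Set ℕ) :=
      fun x hx => AddSubmonoid.subset_closure hx
    have heven : ∀ m, Even m → m ≠ 2 → m ∈ AddSubmonoid.closure ({4, 6, v} : Set ℕ) := by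
      intro m hm h2
      obtain ⟨i, j, rfl⟩ := exists_eq_four_mul_add_six_mul hm h2
      rw [mul_comm 4, mul_comm 6, ← smul_eq_mul i, ← smul_eq_mul j]
      exact add_mem (nsmul_mem (hgen 4 (by simp)) i) (nsmul_mem (hgen 6 (by simp)) j)
    rintro (⟨hn, h2⟩ | ⟨hn, hvn, hn2⟩)
    · exact heven n hn h2
    · obtain ⟨d, rfl⟩ := Nat.exists_eq_add_of_le hvn
      rw [Nat.odd_iff] at hn
      exact add_mem (hgen v (by simp)) (heven d (Nat.even_iff.mpr (by omega)) (by omega))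

structure IsMonicOfOrderSix (φ : ℂ⟦X⟧) : Prop where
  X_pow_six_dvd : X ^ 6 ∣ φ
  coeff_six : coeff 6 φ = 1

structure IsFirstOddExponent (φ : ℂ⟦X⟧) (β : ℕ) : Prop where
  odd : Odd β
  coeff_ne_zero : coeff β φ ≠ 0
  oddVanishBelow : OddVanishBelow β φ

section Branch

variable {φ : ℂ⟦X⟧} {β : ℕ}

theorem IsMonicOfOrderSix.constantCoeff_eq_zero (hφ : IsMonicOfOrderSix φ) :
    constantCoeff φ = 0 :=
  X_dvd_iff.mp ((dvd_pow_self X (by norm_num)).trans hφ.X_pow_six_dvd)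

theorem constantCoeff_X_pow_four : constantCoeff (X ^ 4 : ℂ⟦X⟧) = 0 := by simp

theorem IsMonicOfOrderSix.X_pow_dvd_pow_mul_pow (hφ : IsMonicOfOrderSix φ) (i j : ℕ) :
    X ^ (4 * i + 6 * j) ∣ (X ^ 4) ^ i * φ ^ j := by
  rw [pow_add, pow_mul, pow_mul]
  exact mul_dvd_mul_left _ (pow_dvd_pow_of_dvd hφ.X_pow_six_dvd j)

theorem IsMonicOfOrderSix.coeff_pow_mul_pow_self (hφ : IsMonicOfOrderSix φ) (i j : ℕ) :
    coeff (4 * i + 6 * j) ((X ^ 4) ^ i * φ ^ j) = 1 := by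
  obtain ⟨u, rfl⟩ := hφ.X_pow_six_dvd
  have hu : constantCoeff u = 1 := by
    simpa [coeff_X_pow_mul'] using hφ.coeff_six
  rw [mul_pow, ← mul_assoc, ← pow_mul, ← pow_mul, ← pow_add, coeff_X_pow_mul', if_pos le_rfl,
    Nat.sub_self, coeff_zero_eq_constantCoeff_apply, map_pow, hu, one_pow]

theorem IsMonicOfOrderSix.oddVanishBelow_pow (hφ : IsMonicOfOrderSix φ)
    (hβ : OddVanishBelow β φ) (j : ℕ) : OddVanishBelow (β + 6 * j - 6) (φ ^ j) := by
  induction j with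
  | zero => simpa using oddVanishBelow_X_pow (R := ℂ) Even.zero (β - 6)
  | succ j ih =>
    rw [pow_succ]
    exact ih.mul hβ (by simpa using (hφ.X_pow_dvd_pow_mul_pow 0 j)) hφ.X_pow_six_dvd
      (by omega) (by omega)

theorem IsMonicOfOrderSix.oddVanishBelow_pow_mul_pow (hφ : IsMonicOfOrderSix φ)
    (hβ : OddVanishBelow β φ) (i j : ℕ) :
    OddVanishBelow (β + 4 * i + 6 * j - 6) ((X ^ 4) ^ i * φ ^ j) := by
  rw [← pow_mul]
  exact (oddVanishBelow_X_pow ⟨2 * i, by ring⟩ (β + 4 * i + 6 * j - 6)).mul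
    (hφ.oddVanishBelow_pow hβ j) dvd_rfl (by simpa using hφ.X_pow_dvd_pow_mul_pow 0 j)
    (by omega) (by omega)

theorem IsMonicOfOrderSix.coeff_pow_mul_pow_eq_zero_of_odd (hφ : IsMonicOfOrderSix φ)
    (hβ : OddVanishBelow β φ) (i j : ℕ) {n : ℕ} (hn : Odd n)
    (hlt : j ≠ 0 → n + 6 < β + 4 * i + 6 * j) :
    coeff n ((X ^ 4) ^ i * φ ^ j) = 0 := by
  rcases eq_or_ne j 0 with rfl | hj
  · rw [pow_zero, mul_one, ← pow_mul]
    exact oddVanishBelow_X_pow ⟨2 * i, by ring⟩ (n + 1) n (by omega) hn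
  · exact hφ.oddVanishBelow_pow_mul_pow hβ i j n (by have := hlt hj; omega) hn

theorem IsMonicOfOrderSix.oddVanishBelow_of_mem_sub2Range (hφ : IsMonicOfOrderSix φ)
    (hβ : OddVanishBelow β φ) {f : ℂ⟦X⟧} (hf : f ∈ sub2Range (X ^ 4) φ) :
    OddVanishBelow β f := fun n hn hodd =>
  coeff_eq_zero_of_mem_sub2Range constantCoeff_X_pow_four hφ.constantCoeff_eq_zero
    (fun i j => hφ.coeff_pow_mul_pow_eq_zero_of_odd hβ i j hodd fun hj => by omega) hf

theorem IsMonicOfOrderSix.coeff_eq_zero_of_lt_four (hφ : IsMonicOfOrderSix φ) {f : ℂ⟦X⟧}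
    (hf : f ∈ sub2Range (X ^ 4) φ) {n : ℕ} (hn₀ : n ≠ 0) (hn₄ : n < 4) : coeff n f = 0 := by
  refine coeff_eq_zero_of_mem_sub2Range constantCoeff_X_pow_four hφ.constantCoeff_eq_zero
    (fun i j => ?_) hf
  rcases Nat.eq_zero_or_pos (i + j) with hij | hij
  · obtain ⟨rfl, rfl⟩ : i = 0 ∧ j = 0 := by omega
    simp [coeff_one, hn₀]
  · exact X_pow_dvd_iff.mp (hφ.X_pow_dvd_pow_mul_pow i j) n (by omega)

theorem IsMonicOfOrderSix.coeff_eq_coeff_six_mul_of_mem_sub2Range (hφ : IsMonicOfOrderSix φ)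
    (hβ : OddVanishBelow β φ) {f : ℂ⟦X⟧} (hf : f ∈ sub2Range (X ^ 4) φ) {w : ℕ} (hw : Odd w)
    (hβw : β ≤ w) (hwβ : w ≤ β + 2) : coeff w f = coeff 6 f * coeff w φ := by
  rw [mul_comm]
  refine coeff_eq_mul_coeff_of_mem_sub2Range constantCoeff_X_pow_four hφ.constantCoeff_eq_zero
    (fun i j => ?_) hf
  have hX := X_pow_dvd_iff.mp (hφ.X_pow_dvd_pow_mul_pow i j)
  rcases eq_or_ne j 0 with rfl | hj
  · rw [hφ.coeff_pow_mul_pow_eq_zero_of_odd hβ i 0 hw (absurd rfl), pow_zero, mul_one, ← pow_mul,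
      coeff_X_pow, if_neg (by omega), mul_zero]
  · by_cases h01 : i = 0 ∧ j = 1
    · obtain ⟨rfl, rfl⟩ := h01
      simp [hφ.coeff_six]
    · rw [hφ.coeff_pow_mul_pow_eq_zero_of_odd hβ i j hw fun _ => by omega, hX 6 (by omega),
        mul_zero]

theorem IsFirstOddExponent.seven_le (hφ : IsMonicOfOrderSix φ) (hβ : IsFirstOddExponent φ β) :
    7 ≤ β := by
  have h6 : 6 ≤ β := by
    by_contra h
    exact hβ.coeff_ne_zero (X_pow_dvd_iff.mp hφ.X_pow_six_dvd β (by omega))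
  obtain ⟨k, hk⟩ := hβ.odd
  omega

theorem IsMonicOfOrderSix.exists_mem_sub2Range_coeff_add_six_ne_zero (hφ : IsMonicOfOrderSix φ)
    (hβ : IsFirstOddExponent φ β) : ∃ Z ∈ sub2Range (X ^ 4) φ,
      X ^ 13 ∣ Z ∧ OddVanishBelow (β + 6) Z ∧ coeff (β + 6) Z ≠ 0 := by
  have hβ7 := hβ.seven_le hφ
  set R := φ - X ^ 6 with hR
  have hR7 : X ^ 7 ∣ R := X_pow_dvd_iff.mpr fun n hn => by
    rcases eq_or_ne n 6 with rfl | hn6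
    · rw [hR, map_sub, coeff_X_pow_self, hφ.coeff_six, sub_self]
    · rw [hR, map_sub, coeff_X_pow, if_neg hn6, X_pow_dvd_iff.mp hφ.X_pow_six_dvd n (by omega),
        sub_zero]
  have hRodd : OddVanishBelow β R := hβ.oddVanishBelow.sub (oddVanishBelow_X_pow ⟨3, rfl⟩ β)
  have hR2 : OddVanishBelow (β + 7) (R ^ 2) := sq R ▸ hRodd.mul hRodd hR7 hR7 le_rfl le_rfl
  refine ⟨2 • (X ^ 6 * R) + R ^ 2, ?_, dvd_add (dvd_nsmul_of_dvd 2 ?_) ?_,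
    (((oddVanishBelow_X_pow ⟨3, rfl⟩ (β + 6)).mul hRodd dvd_rfl hR7 (by omega) le_rfl).nsmul 2).add
      (hR2.mono (by omega)), ?_⟩
  · rw [show 2 • (X ^ 6 * R) + R ^ 2 = (X ^ 4) ^ 0 * φ ^ 2 - (X ^ 4) ^ 3 * φ ^ 0 by rw [hR]; ring]
    exact sub_mem (pow_mul_pow_mem_sub2Range constantCoeff_X_pow_four hφ.constantCoeff_eq_zero _ _)
      (pow_mul_pow_mem_sub2Range constantCoeff_X_pow_four hφ.constantCoeff_eq_zero _ _)
  · rw [show 13 = 6 + 7 by rfl, pow_add]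
    exact mul_dvd_mul_left _ hR7
  · refine (pow_dvd_pow (X : ℂ⟦X⟧) (by norm_num : 13 ≤ 7 * 2)).trans ?_
    rw [pow_mul]
    exact pow_dvd_pow_of_dvd hR7 2
  · rw [map_add, map_nsmul, coeff_X_pow_mul', if_pos (by omega), Nat.add_sub_cancel,
      hR2 _ (by omega) (hβ.odd.add_even ⟨3, rfl⟩), add_zero, hR, map_sub, coeff_X_pow,
      if_neg (by omega), sub_zero]
    exact smul_ne_zero two_ne_zero hβ.coeff_ne_zero

theorem IsMonicOfOrderSix.exists_mem_sub2Range_order_eq (hφ : IsMonicOfOrderSix φ)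
    (hβ : IsFirstOddExponent φ β) : ∃ f ∈ sub2Range (X ^ 4) φ, f.order = β + 6 := by
  obtain ⟨Z, hZ, hZ13, hZodd, hZβ⟩ := hφ.exists_mem_sub2Range_coeff_add_six_ne_zero hβ
  refine exists_mem_order_eq _ (t := β + 6) (fun n => Odd n ∨ n ≤ 12) hZ
    (fun n hn hP => hP.elim (hZodd n hn) fun h => X_pow_dvd_iff.mp hZ13 n (by omega)) hZβ ?_
  intro m hm hPm
  obtain ⟨hmeven, hm12⟩ := not_or.mp hPm
  obtain ⟨i, j, rfl⟩ := exists_eq_four_mul_add_six_mul (Nat.not_odd_iff_even.mp hmeven) (by omega)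
  have hodd : ∀ n, Odd n → n < β + 6 + 1 → coeff n ((X ^ 4) ^ i * φ ^ j) = 0 := fun n hn hnβ =>
    hφ.coeff_pow_mul_pow_eq_zero_of_odd hβ.oddVanishBelow i j hn fun _ => by omega
  refine ⟨_, pow_mul_pow_mem_sub2Range constantCoeff_X_pow_four hφ.constantCoeff_eq_zero i j,
    by rw [hφ.coeff_pow_mul_pow_self]; exact one_ne_zero,
    X_pow_dvd_iff.mp (hφ.X_pow_dvd_pow_mul_pow i j), fun n hn hP => ?_,
    hodd _ (hβ.odd.add_even ⟨3, rfl⟩) (by omega)⟩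
  rcases hP with hn' | hle
  · exact hodd n hn' (by omega)
  · exact X_pow_dvd_iff.mp (hφ.X_pow_dvd_pow_mul_pow i j) n (by omega)

theorem derivative_X_pow_four : d⁄dX ℂ (X ^ 4 : ℂ⟦X⟧) = 4 * X ^ 3 := by
  simp

theorem IsMonicOfOrderSix.X_pow_three_dvd_of_mem_pullbackForms (hφ : IsMonicOfOrderSix φ) {ω : ℂ⟦X⟧}
    (hω : ω ∈ pullbackForms (X ^ 4) φ) : X ^ 3 ∣ ω := by
  obtain ⟨f, -, g, -, rfl⟩ := mem_pullbackForms_iff.mp hω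
  refine dvd_add (Dvd.dvd.mul_left ?_ f) (Dvd.dvd.mul_left ?_ g)
  · rw [derivative_X_pow_four]
    exact dvd_mul_left _ _
  · exact (pow_dvd_pow X (by norm_num)).trans (X_pow_dvd_derivative (a := 5) hφ.X_pow_six_dvd)

theorem IsMonicOfOrderSix.oddVanishBelow_X_mul_pullback (hφ : IsMonicOfOrderSix φ)
    (hβ : OddVanishBelow β φ) {f g : ℂ⟦X⟧} (hf : f ∈ sub2Range (X ^ 4) φ)
    (hg : g ∈ sub2Range (X ^ 4) φ) {a : ℕ} (ha : a ≤ 4) (hga : X ^ a ∣ g) :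
    OddVanishBelow (β + a) (X * (f * d⁄dX ℂ (X ^ 4) + g * d⁄dX ℂ φ)) := by
  rw [show X * (f * d⁄dX ℂ (X ^ 4) + g * d⁄dX ℂ φ) =
    X * d⁄dX ℂ (X ^ 4) * f + g * (X * d⁄dX ℂ φ) by ring]
  refine (((oddVanishBelow_X_pow ⟨2, rfl⟩ (β + a)).X_mul_derivative).mul
    (hφ.oddVanishBelow_of_mem_sub2Range hβ hf) (X_pow_dvd_X_mul_derivative dvd_rfl) (b := 0)
    (by rw [pow_zero]; exact one_dvd f) (by omega) (by omega)).add ?_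
  exact (hφ.oddVanishBelow_of_mem_sub2Range hβ hg).mul hβ.X_mul_derivative hga
    (X_pow_dvd_X_mul_derivative hφ.X_pow_six_dvd) (by omega) (by omega)

theorem IsMonicOfOrderSix.coeff_five_pullback (hφ : IsMonicOfOrderSix φ) {f g : ℂ⟦X⟧}
    (hf : coeff 2 f = 0) : coeff 5 (f * d⁄dX ℂ (X ^ 4) + g * d⁄dX ℂ φ) = 6 * constantCoeff g := by
  obtain ⟨ψ, hψ⟩ := X_pow_dvd_derivative (a := 5) hφ.X_pow_six_dvd
  have hψ0 : constantCoeff ψ = 6 := by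
    have h5 := coeff_derivative φ 5
    rw [hψ, coeff_X_pow_mul', if_pos le_rfl, Nat.sub_self, hφ.coeff_six] at h5
    rw [← coeff_zero_eq_constantCoeff_apply, h5]
    norm_num
  rw [derivative_X_pow_four, hψ, map_add, mul_left_comm, ← map_ofNat C 4, coeff_C_mul,
    coeff_mul_X_pow', if_pos (by norm_num), hf, mul_left_comm, coeff_X_pow_mul', if_pos le_rfl,
    Nat.sub_self, coeff_zero_eq_constantCoeff_apply, map_mul, hψ0]
  ring

theorem IsMonicOfOrderSix.add_three_le_of_mem_pullbackForms (hφ : IsMonicOfOrderSix φ)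
    (hβ : IsFirstOddExponent φ β) {ω : ℂ⟦X⟧} (hω : ω ∈ pullbackForms (X ^ 4) φ) {m : ℕ}
    (hm : Even m) (hord : ω.order = m) : β + 3 ≤ m := by
  obtain ⟨f, hf, g, hg, rfl⟩ := mem_pullbackForms_iff.mp hω
  obtain ⟨hωm, hωlt⟩ := order_eq_nat.mp hord
  have hXω := coeff_succ_X_mul m (f * d⁄dX ℂ (X ^ 4) + g * d⁄dX ℂ φ)
  by_cases hg0 : constantCoeff g = 0
  · have hg4 : X ^ 4 ∣ g := X_pow_dvd_iff.mpr fun n hn => by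
      rcases eq_or_ne n 0 with rfl | hn₀
      · rwa [coeff_zero_eq_constantCoeff_apply]
      · exact hφ.coeff_eq_zero_of_lt_four hg hn₀ hn
    by_contra hlt
    exact hωm (hXω ▸ hφ.oddVanishBelow_X_mul_pullback hβ.oddVanishBelow hf hg le_rfl hg4 (m + 1)
      (by omega) hm.add_one)
  · have h5 : coeff 5 (f * d⁄dX ℂ (X ^ 4) + g * d⁄dX ℂ φ) ≠ 0 := by
      rw [hφ.coeff_five_pullback (hφ.coeff_eq_zero_of_lt_four hf two_ne_zero (by norm_num))]
      exact mul_ne_zero (by norm_num) hg0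
    have hm5 : m ≤ 5 := by
      by_contra h
      exact h5 (hωlt 5 (by omega))
    have hβ7 := hβ.seven_le hφ
    exact absurd (hXω ▸ hφ.oddVanishBelow_X_mul_pullback hβ.oddVanishBelow hf hg (Nat.zero_le 4)
      (by rw [pow_zero]; exact one_dvd g) (m + 1) (by omega) hm.add_one) hωm

theorem IsMonicOfOrderSix.exists_mem_pullbackForms_coeff_ne_zero (hφ : IsMonicOfOrderSix φ)
    (hβ : IsFirstOddExponent φ β) (s : ℕ) : ∃ ω ∈ pullbackForms (X ^ 4) φ,
      X ^ (4 * s + 10) ∣ ω ∧ (∀ n < β + 4 * s + 3, Even n → coeff n ω = 0) ∧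
        coeff (β + 4 * s + 3) ω ≠ 0 := by
  have hβ7 := hβ.seven_le hφ
  have h₁ := constantCoeff_X_pow_four
  have h₂ := hφ.constantCoeff_eq_zero
  set ψ := X * d⁄dX ℂ φ - 6 • φ with hψ
  have hψ7 : X ^ 7 ∣ ψ := X_pow_dvd_iff.mpr fun n hn => by
    rw [hψ, coeff_X_mul_derivative_sub_nsmul]
    rcases eq_or_ne n 6 with rfl | hn6
    · norm_num
    · rw [X_pow_dvd_iff.mp hφ.X_pow_six_dvd n (by omega), mul_zero]
  have hω : 2 • ((X ^ 4) ^ (s + 1) * φ ^ 0 * d⁄dX ℂ φ) -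
      3 • ((X ^ 4) ^ s * φ ^ 1 * d⁄dX ℂ (X ^ 4)) = 2 • (X ^ (4 * s + 3) * ψ) := by
    rw [hψ, derivative_X_pow_four]
    ring
  refine ⟨_, hω ▸ sub_mem (nsmul_mem (mem_pullbackForms_iff.mpr ⟨0, zero_mem _, _,
      pow_mul_pow_mem_sub2Range h₁ h₂ (s + 1) 0, by rw [zero_mul, zero_add]⟩) 2)
      (nsmul_mem (mem_pullbackForms_iff.mpr ⟨_, pow_mul_pow_mem_sub2Range h₁ h₂ s 1, 0,
        zero_mem _, by rw [zero_mul, add_zero]⟩) 3), dvd_nsmul_of_dvd 2 ?_,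
    fun n hn heven => ?_, ?_⟩
  · rw [show 4 * s + 10 = 4 * s + 3 + 7 by ring, pow_add]
    exact mul_dvd_mul_left _ hψ7
  · rw [map_nsmul, coeff_X_pow_mul']
    split_ifs with h
    · obtain ⟨k, hk⟩ := heven
      rw [hψ, coeff_X_mul_derivative_sub_nsmul,
        hβ.oddVanishBelow _ (by omega) ⟨k - 2 * s - 2, by omega⟩, mul_zero, smul_zero]
    · exact smul_zero _
  · rw [map_nsmul, coeff_X_pow_mul', if_pos (by omega),
      show β + 4 * s + 3 - (4 * s + 3) = β by omega, hψ, coeff_X_mul_derivative_sub_nsmul]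
    refine smul_ne_zero two_ne_zero (mul_ne_zero (sub_ne_zero.mpr ?_) hβ.coeff_ne_zero)
    exact_mod_cast (by omega : β ≠ 6)

theorem IsMonicOfOrderSix.exists_mem_pullbackForms_order_eq (hφ : IsMonicOfOrderSix φ)
    (hβ : IsFirstOddExponent φ β) (s : ℕ) :
    ∃ ω ∈ pullbackForms (X ^ 4) φ, ω.order = β + 4 * s + 3 := by
  obtain ⟨ω, hω, hω10, hωeven, hωβ⟩ := hφ.exists_mem_pullbackForms_coeff_ne_zero hβ s
  refine exists_mem_order_eq _ (t := β + 4 * s + 3) (fun n => Even n ∨ n < 4 * s + 10) hω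
    (fun n hn hP => hP.elim (hωeven n hn) (X_pow_dvd_iff.mp hω10 n)) hωβ ?_
  intro m hm hPm
  obtain ⟨hmodd, hm10⟩ := not_or.mp hPm
  obtain ⟨i, j, hij⟩ := exists_eq_four_mul_add_six_mul (m := m + 1)
    (Nat.not_even_iff_odd.mp hmodd).add_one (by omega)
  have hcoeff : ∀ n, coeff n (d⁄dX ℂ ((X ^ 4) ^ i * φ ^ j)) =
      coeff (n + 1) ((X ^ 4) ^ i * φ ^ j) * (n + 1) := coeff_derivative _
  have heven : ∀ n, Even n → n < β + 4 * s + 3 + 1 →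
      coeff n (d⁄dX ℂ ((X ^ 4) ^ i * φ ^ j)) = 0 := fun n hn hnβ => by
    rw [hcoeff, hφ.coeff_pow_mul_pow_eq_zero_of_odd hβ.oddVanishBelow i j hn.add_one
      fun _ => by omega, zero_mul]
  refine ⟨_, derivative_pow_mul_pow_mem_pullbackForms constantCoeff_X_pow_four
    hφ.constantCoeff_eq_zero i j, ?_, fun n hn => ?_, fun n hn hP => ?_,
    heven _ (by obtain ⟨k, hk⟩ := hβ.odd; exact ⟨k + 2 * s + 2, by omega⟩) (by omega)⟩
  · rw [hcoeff, hij, hφ.coeff_pow_mul_pow_self, one_mul]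
    exact Nat.cast_add_one_ne_zero m
  · rw [hcoeff, X_pow_dvd_iff.mp (hφ.X_pow_dvd_pow_mul_pow i j) (n + 1) (by omega), zero_mul]
  · rcases hP with hn' | hlt
    · exact heven n hn' (by omega)
    · rw [hcoeff, X_pow_dvd_iff.mp (hφ.X_pow_dvd_pow_mul_pow i j) (n + 1) (by omega), zero_mul]

theorem IsMonicOfOrderSix.exists_isFirstOddExponent (hφ : IsMonicOfOrderSix φ) {v : ℕ}
    (hv : Odd v) (hvΓ : v ∈ valueSemigroup (X ^ 4) φ) : ∃ β, IsFirstOddExponent φ β := by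
  classical
  have hex : ∃ n, Odd n ∧ coeff n φ ≠ 0 := by
    by_contra! h
    obtain ⟨f, hf, hord⟩ := mem_valueSemigroup_iff.mp hvΓ
    exact (order_eq_nat.mp hord).1
      (hφ.oddVanishBelow_of_mem_sub2Range (β := v + 1) (fun n _ hn => h n hn) hf v (by omega) hv)
  exact ⟨Nat.find hex, (Nat.find_spec hex).1, (Nat.find_spec hex).2,
    fun n hn hodd => by_contra fun h => Nat.find_min hex hn ⟨hodd, h⟩⟩

theorem IsMonicOfOrderSix.eq_add_six_of_valueSemigroup_eq (hφ : IsMonicOfOrderSix φ)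
    (hβ : IsFirstOddExponent φ β) {v : ℕ} (hv : Odd v) (hv₆ : 6 < v)
    (hΓ : valueSemigroup (X ^ 4) φ = AddSubmonoid.closure ({4, 6, v} : Set ℕ)) : v = β + 6 := by
  have hvΓ : v ∈ valueSemigroup (X ^ 4) φ := hΓ ▸ AddSubmonoid.subset_closure (by simp)
  obtain ⟨f, hf, hord⟩ := mem_valueSemigroup_iff.mp hvΓ
  obtain ⟨hfv, hflt⟩ := order_eq_nat.mp hord
  have hβv : β ≤ v := by
    by_contra h
    exact hfv (hφ.oddVanishBelow_of_mem_sub2Range hβ.oddVanishBelow hf v (by omega) hv)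
  have hvβ : v ≠ β ∧ v ≠ β + 2 := by
    constructor <;> rintro rfl <;>
      exact hfv (by rw [hφ.coeff_eq_coeff_six_mul_of_mem_sub2Range hβ.oddVanishBelow hf hv
        (by omega) (by omega), hflt 6 hv₆, zero_mul])
  obtain ⟨g, hg, hgord⟩ := hφ.exists_mem_sub2Range_order_eq hβ
  have hβ6 : β + 6 ∈ valueSemigroup (X ^ 4) φ := mem_valueSemigroup_iff.mpr ⟨g, hg, hgord⟩
  rw [hΓ, SetLike.mem_coe, mem_closure_four_six_iff hv (by omega)] at hβ6
  have hβodd := hβ.odd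
  rw [Nat.odd_iff] at hv hβodd
  simp only [Nat.even_iff, Nat.odd_iff] at hβ6
  omega

theorem IsMonicOfOrderSix.diffValues_diff_valueSemigroup (hφ : IsMonicOfOrderSix φ)
    (hβ : IsFirstOddExponent φ β)
    (hΓ : valueSemigroup (X ^ 4) φ = AddSubmonoid.closure ({4, 6, β + 6} : Set ℕ)) :
    diffValues (X ^ 4) φ \ valueSemigroup (X ^ 4) φ = {β + 4, β + 8} := by
  have hβodd := hβ.odd
  have hβ7 := hβ.seven_le hφ
  ext n
  rw [hΓ, Set.mem_sdiff, SetLike.mem_coe, mem_closure_four_six_iff (hβodd.add_even ⟨3, rfl⟩)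
    (by omega), mem_diffValues_iff, Set.mem_insert_iff, Set.mem_singleton_iff]
  rw [Nat.odd_iff] at hβodd
  constructor
  · rintro ⟨⟨ω, hω, m, hord, rfl⟩, hnot⟩
    simp only [Nat.even_iff, Nat.odd_iff] at hnot
    rcases Nat.even_or_odd m with hm | hm
    · have := hφ.add_three_le_of_mem_pullbackForms hβ hω hm hord
      rw [Nat.even_iff] at hm
      omega
    · have h3 : 3 ≤ m := by
        by_contra h
        exact (order_eq_nat.mp hord).1
          (X_pow_dvd_iff.mp (hφ.X_pow_three_dvd_of_mem_pullbackForms hω) m (by omega))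
      rw [Nat.odd_iff] at hm
      omega
  · have hnot : ∀ n, n = β + 4 ∨ n = β + 8 →
        ¬(Even n ∧ n ≠ 2 ∨ Odd n ∧ β + 6 ≤ n ∧ n ≠ β + 6 + 2) := by
      simp only [Nat.even_iff, Nat.odd_iff]
      omega
    rintro (rfl | rfl)
    · obtain ⟨ω, hω, hord⟩ := hφ.exists_mem_pullbackForms_order_eq hβ 0
      exact ⟨⟨ω, hω, β + 3, hord, rfl⟩, hnot _ (Or.inl rfl)⟩
    · obtain ⟨ω, hω, hord⟩ := hφ.exists_mem_pullbackForms_order_eq hβ 1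
      exact ⟨⟨ω, hω, β + 7, hord, rfl⟩, hnot _ (Or.inr rfl)⟩

end Branch

/-- If a parameterization `(T⁴, T⁶ + ∑_{i≥7} aᵢTⁱ)` has value semigroup `⟨4, 6, v₂⟩`
with `v₂ > 12` odd, then `Λ \ Γ = {v₂ - 2, v₂ + 2}`. -/
theorem lambda_minus_gamma_4_6_v2 (a : ℕ → ℂ) (φ₁ φ₂ : PowerSeries ℂ)
    (hφ₁ : φ₁ = PowerSeries.X ^ 4)
    (hφ₂ : φ₂ = PowerSeries.mk fun n => if n = 6 then 1 else if 7 ≤ n then a n else 0)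
    (v2 : ℕ) (h12 : 12 < v2) (hodd : Odd v2)
    (hΓ : valueSemigroup φ₁ φ₂ = (AddSubmonoid.closure ({4, 6, v2} : Set ℕ) : Set ℕ)) :
    diffValues φ₁ φ₂ \ valueSemigroup φ₁ φ₂ = {v2 - 2, v2 + 2} := by
  subst hφ₁
  have hφ : IsMonicOfOrderSix φ₂ :=
    ⟨X_pow_dvd_iff.mpr fun n hn => by rw [hφ₂, coeff_mk, if_neg (by omega), if_neg (by omega)],
      by rw [hφ₂, coeff_mk, if_pos rfl]⟩
  obtain ⟨β, hβ⟩ := hφ.exists_isFirstOddExponent hodd (hΓ ▸ AddSubmonoid.subset_closure (by simp))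
  obtain rfl := hφ.eq_add_six_of_valueSemigroup_eq hβ hodd (by omega) hΓ
  rw [hφ.diffValues_diff_valueSemigroup hβ hΓ, show β + 6 - 2 = β + 4 by omega]
end

section
/- Let $v_2$ be an integer with $v_2 > 18$ and $3 \nmid v_2$, let $a_j \in \mathbb{C}$ for integers $j$ with $-\lfloor v_2/3 \rfloor - 3 \le j \le -4$, and define $\varphi_1 = T^6$ and $\varphi_2 = T^9 + T^{v_2 - 9} + \sum_{j = -\lfloor v_2/3 \rfloor - 3}^{-4} a_j T^{2 v_2 + 3j}$ in $\mathbb{C}[[T]]$. Let $\Lambda$ be the value set of differentials of $(\varphi_1, \varphi_2)$. Then $v_2 - 3$, $v_2 + 3$, $2v_2 - 3$ and $2v_2 + 3$ all belong to $\Lambda$, and none of them belongs to $\langle 6, 9, v_2 \rangle$. -/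
/-!
Write `k = v₂ - 9`, so `φ₁ = T⁶` and `φ₂ = T⁹ + T^k + S` with `T^(k+1) ∣ S`. The pullback of
`ω₀ = 3 x₂ dx₁ - 2 x₁ dx₂` kills the `T⁹` term of `φ₂`, leaving `(18 - 2k) T^(k+5) dT` plus
higher order terms, and `h = x₂² - x₁³` pulls back to `2 T^(k+9)` plus higher order terms.
Hence `ω₀`, `x₁ ω₀`, `h ω₀`, `x₁ h ω₀` have values `k + 6`, `k + 12`, `2k + 15`, `2k + 21`.
None of these lies in `⟨6, 9, v₂⟩`: reducing `6p + 9q + r v₂` modulo `3` forces `r = 1` or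
`r = 2`, and then `6p + 9q` would have to be `±3`.
-/

open PowerSeries

theorem sub2_add (φ₁ φ₂ : ℂ⟦X⟧) (g h : MvPowerSeries (Fin 2) ℂ) :
    sub2 φ₁ φ₂ (g + h) = sub2 φ₁ φ₂ g + sub2 φ₁ φ₂ h := by
  ext n
  simp [sub2, Finset.sum_add_distrib, add_mul]

theorem sub2_monomial_s12 {φ₁ φ₂ : ℂ⟦X⟧} (hφ₁ : constantCoeff φ₁ = 0) (hφ₂ : constantCoeff φ₂ = 0)
    (u : Fin 2 →₀ ℕ) (c : ℂ) :
    sub2 φ₁ φ₂ (MvPowerSeries.monomial u c) = C c * (φ₁ ^ u 0 * φ₂ ^ u 1) := by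
  classical
  have hexp : ∀ p : ℕ × ℕ, Finsupp.single 0 p.1 + Finsupp.single 1 p.2 = u ↔ (u 0, u 1) = p := by
    rintro ⟨a, b⟩
    constructor
    · rintro rfl; simp
    · rintro ⟨⟩
      ext i; fin_cases i <;> simp
  ext n
  simp_rw [sub2, coeff_mk, MvPowerSeries.coeff_monomial, hexp, ite_mul, zero_mul,
    Finset.sum_ite_eq, coeff_C_mul, Finset.mem_product, Finset.mem_range]
  split_ifs with hn
  · rfl
  · have hX : X ^ (u 0 + u 1) ∣ φ₁ ^ u 0 * φ₂ ^ u 1 := by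
      rw [pow_add]
      exact mul_dvd_mul (pow_dvd_pow_of_dvd (X_dvd_iff.2 hφ₁) _)
        (pow_dvd_pow_of_dvd (X_dvd_iff.2 hφ₂) _)
    rw [X_pow_dvd_iff.1 hX n (by omega), mul_zero]

theorem sub2_coe_eq_aeval {φ₁ φ₂ : ℂ⟦X⟧} (hφ₁ : constantCoeff φ₁ = 0) (hφ₂ : constantCoeff φ₂ = 0)
    (P : MvPolynomial (Fin 2) ℂ) :
    sub2 φ₁ φ₂ P = MvPolynomial.aeval ![φ₁, φ₂] P := by
  induction P using MvPolynomial.induction_on' with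
  | monomial u c =>
    rw [MvPolynomial.coe_monomial, sub2_monomial_s12 hφ₁ hφ₂, MvPolynomial.aeval_monomial,
      Finsupp.prod_fintype _ _ (fun _ => pow_zero _), Fin.prod_univ_two]
    rfl
  | add P Q hP hQ => rw [MvPolynomial.coe_add, sub2_add, hP, hQ, map_add]

theorem order_C_mul_X_pow_add_X_pow_succ_mul {R : Type*} [Semiring R] {c : R} (hc : c ≠ 0)
    (n : ℕ) (r : R⟦X⟧) : (C c * X ^ n + X ^ (n + 1) * r).order = (n : ℕ∞) := by
  refine order_eq_nat.2 ⟨?_, fun i hi => ?_⟩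
  · simp [coeff_X_pow_mul', hc]
  · simp [coeff_X_pow_mul', hi.ne]
    omega

/-- The pullback of the 1-form `3 x₂ dx₁ - 2 x₁ dx₂` along `(φ₁, φ₂)`, as a multiple of `dT`. -/
noncomputable def ω₀ (φ₁ φ₂ : ℂ⟦X⟧) : ℂ⟦X⟧ := 3 * φ₂ * d⁄dX ℂ φ₁ - 2 * φ₁ * d⁄dX ℂ φ₂

theorem add_one_mem_diffValues_of_order_mul_ω₀ {φ₁ φ₂ : ℂ⟦X⟧} (hφ₁ : constantCoeff φ₁ = 0)
    (hφ₂ : constantCoeff φ₂ = 0) (P : MvPolynomial (Fin 2) ℂ) {n : ℕ}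
    (h : (MvPolynomial.aeval ![φ₁, φ₂] P * ω₀ φ₁ φ₂).order = n) :
    n + 1 ∈ diffValues φ₁ φ₂ := by
  set A : MvPowerSeries (Fin 2) ℂ := ↑(3 * MvPolynomial.X 1 * P : MvPolynomial (Fin 2) ℂ)
  set B : MvPowerSeries (Fin 2) ℂ := ↑(-2 * MvPolynomial.X 0 * P : MvPolynomial (Fin 2) ℂ)
  have hform : sub2 φ₁ φ₂ A * derivativeFun φ₁ + sub2 φ₁ φ₂ B * derivativeFun φ₂ =
      MvPolynomial.aeval ![φ₁, φ₂] P * ω₀ φ₁ φ₂ := by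
    change _ * d⁄dX ℂ φ₁ + _ * d⁄dX ℂ φ₂ = _
    simp only [A, B, sub2_coe_eq_aeval hφ₁ hφ₂, ω₀, map_mul, map_neg, map_ofNat,
      MvPolynomial.aeval_X, Matrix.cons_val_zero, Matrix.cons_val_one]
    ring
  refine ⟨A, B, ?_, ?_⟩ <;> rw [hform]
  · exact order_eq_top.not.1 (h ▸ ENat.coe_ne_top n)
  · rw [h]; rfl

section SixNine

variable {k : ℕ} {S : ℂ⟦X⟧}

theorem order_ω₀_X_pow_six (hk : 10 ≤ k) (hS : X ^ (k + 1) ∣ S) :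
    (ω₀ (X ^ 6) (X ^ 9 + X ^ k + S)).order = ((k + 5 : ℕ) : ℕ∞) := by
  obtain ⟨j, rfl⟩ := Nat.exists_eq_add_of_le' hk
  obtain ⟨g, rfl⟩ := hS
  have hc : (18 - 2 * (j + 10 : ℕ) : ℂ) ≠ 0 := by
    rw [sub_ne_zero]
    exact_mod_cast (by omega : 18 ≠ 2 * (j + 10))
  have hlead : ω₀ (X ^ 6) (X ^ 9 + X ^ (j + 10) + X ^ (j + 10 + 1) * g) =
      C (18 - 2 * (j + 10 : ℕ) : ℂ) * X ^ (j + 10 + 5) +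
        X ^ (j + 10 + 5 + 1) * ((16 - 2 * ((j + 10 : ℕ) : ℂ⟦X⟧)) * g - 2 * X * d⁄dX ℂ g) := by
    simp only [ω₀, map_add, Derivation.leibniz, derivative_pow, derivative_X, smul_eq_mul,
      map_sub, map_mul, map_ofNat, map_natCast]
    push_cast
    ring
  rw [hlead]
  exact order_C_mul_X_pow_add_X_pow_succ_mul hc _ _

theorem order_sq_sub_cube_X_pow_six (hk : 10 ≤ k) (hS : X ^ (k + 1) ∣ S) :
    ((X ^ 9 + X ^ k + S) ^ 2 - (X ^ 6) ^ 3).order = ((k + 9 : ℕ) : ℕ∞) := by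
  obtain ⟨j, rfl⟩ := Nat.exists_eq_add_of_le' hk
  obtain ⟨g, rfl⟩ := hS
  have hlead : (X ^ 9 + X ^ (j + 10) + X ^ (j + 10 + 1) * g) ^ 2 - (X ^ 6) ^ 3 =
      C 2 * X ^ (j + 10 + 9) + X ^ (j + 10 + 9 + 1) *
        (X ^ j + X ^ (j + 2) * g ^ 2 + 2 * g + 2 * X ^ (j + 1) * g) := by
    simp only [map_ofNat]
    ring
  rw [hlead]
  exact order_C_mul_X_pow_add_X_pow_succ_mul two_ne_zero _ _

theorem mem_diffValues_X_pow_six (hk : 10 ≤ k) (hS : X ^ (k + 1) ∣ S) :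
    k + 6 ∈ diffValues (X ^ 6) (X ^ 9 + X ^ k + S) ∧
      k + 12 ∈ diffValues (X ^ 6) (X ^ 9 + X ^ k + S) ∧
      2 * k + 15 ∈ diffValues (X ^ 6) (X ^ 9 + X ^ k + S) ∧
      2 * k + 21 ∈ diffValues (X ^ 6) (X ^ 9 + X ^ k + S) := by
  have hc₁ : constantCoeff (X ^ 6 : ℂ⟦X⟧) = 0 := by simp
  have hc₂ : constantCoeff (X ^ 9 + X ^ k + S) = 0 := by
    have hS₀ := X_dvd_iff.1 ((dvd_pow_self X k.succ_ne_zero).trans hS)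
    simp [hS₀, show k ≠ 0 by omega]
  have hω := order_ω₀_X_pow_six hk hS
  have hh := order_sq_sub_cube_X_pow_six hk hS
  have hX₆ : ((X : ℂ⟦X⟧) ^ 6).order = (6 : ℕ) := order_X_pow 6
  have hmem := add_one_mem_diffValues_of_order_mul_ω₀ hc₁ hc₂
  refine ⟨hmem 1 (n := k + 5) ?_, hmem (.X 0) (n := k + 11) ?_,
    hmem (.X 1 ^ 2 - .X 0 ^ 3) (n := 2 * k + 14) ?_,
    hmem (.X 0 * (.X 1 ^ 2 - .X 0 ^ 3)) (n := 2 * k + 20) ?_⟩ <;>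
  simp only [map_one, one_mul, map_mul, map_sub, map_pow, MvPolynomial.aeval_X,
    Matrix.cons_val_zero, Matrix.cons_val_one, order_mul, hω, hh, hX₆] <;>
  norm_cast <;> omega

end SixNine

theorem mem_closure_six_nine_iff {v n : ℕ} :
    n ∈ AddSubmonoid.closure ({6, 9, v} : Set ℕ) ↔ ∃ p q r : ℕ, 6 * p + 9 * q + v * r = n := by
  rw [Set.insert_eq, AddSubmonoid.closure_union, AddSubmonoid.mem_sup]
  simp only [AddSubmonoid.mem_closure_singleton, AddSubmonoid.mem_closure_pair, smul_eq_mul]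
  constructor
  · rintro ⟨_, ⟨p, rfl⟩, _, ⟨q, r, rfl⟩, rfl⟩
    exact ⟨p, q, r, by ring⟩
  · rintro ⟨p, q, r, rfl⟩
    exact ⟨_, ⟨p, rfl⟩, _, ⟨q, r, rfl⟩, by ring⟩

theorem notMem_closure_six_nine {v : ℕ} (hv : 3 < v) (h3 : ¬3 ∣ v) :
    v - 3 ∉ AddSubmonoid.closure ({6, 9, v} : Set ℕ) ∧
      v + 3 ∉ AddSubmonoid.closure ({6, 9, v} : Set ℕ) ∧
      2 * v - 3 ∉ AddSubmonoid.closure ({6, 9, v} : Set ℕ) ∧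
      2 * v + 3 ∉ AddSubmonoid.closure ({6, 9, v} : Set ℕ) := by
  suffices h : ∀ n, (n + 3 = v ∨ n = v + 3 ∨ n + 3 = 2 * v ∨ n = 2 * v + 3) →
      n ∉ AddSubmonoid.closure ({6, 9, v} : Set ℕ) from
    ⟨h _ (by omega), h _ (by omega), h _ (by omega), h _ (by omega)⟩
  rintro n hn hmem
  obtain ⟨p, q, r, rfl⟩ := mem_closure_six_nine_iff.1 hmem
  have hr : r < 3 := by
    by_contra! hr
    have := Nat.mul_le_mul_left v hr
    omega
  interval_cases r <;> omega

/-- For the normal-form parameterization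
`(T⁶, T⁹ + T^{v₂-9} + ∑_{j=-⌊v₂/3⌋-3}^{-4} aⱼ T^{2v₂+3j})` with `v₂ > 18`, `3 ∤ v₂`,
the values `v₂-3`, `v₂+3`, `2v₂-3`, `2v₂+3` all belong to `Λ` and none of them
belongs to `⟨6, 9, v₂⟩`. -/
theorem four_differential_values_6_9_v2 (v2 : ℕ) (h18 : 18 < v2) (h3 : ¬ (3 ∣ v2))
    (a : ℤ → ℂ) (φ₁ φ₂ : PowerSeries ℂ)
    (hφ₁ : φ₁ = PowerSeries.X ^ 6)
    (hφ₂ : φ₂ = PowerSeries.X ^ 9 + PowerSeries.X ^ (v2 - 9) +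
      ∑ j ∈ Finset.Icc (-((v2 / 3 : ℕ) : ℤ) - 3) (-4),
        PowerSeries.C (a j) * PowerSeries.X ^ (2 * (v2 : ℤ) + 3 * j).toNat) :
    (v2 - 3 ∈ diffValues φ₁ φ₂ ∧ v2 + 3 ∈ diffValues φ₁ φ₂ ∧
      2 * v2 - 3 ∈ diffValues φ₁ φ₂ ∧ 2 * v2 + 3 ∈ diffValues φ₁ φ₂) ∧
    (v2 - 3 ∉ AddSubmonoid.closure ({6, 9, v2} : Set ℕ) ∧
      v2 + 3 ∉ AddSubmonoid.closure ({6, 9, v2} : Set ℕ) ∧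
      2 * v2 - 3 ∉ AddSubmonoid.closure ({6, 9, v2} : Set ℕ) ∧
      2 * v2 + 3 ∉ AddSubmonoid.closure ({6, 9, v2} : Set ℕ)) := by
  refine ⟨?_, notMem_closure_six_nine (by omega) h3⟩
  obtain ⟨k, rfl⟩ : ∃ k, v2 = k + 9 := ⟨v2 - 9, by omega⟩
  rw [Nat.add_sub_cancel] at hφ₂
  subst hφ₁ hφ₂
  rw [show k + 9 - 3 = k + 6 by omega, show k + 9 + 3 = k + 12 by omega,
    show 2 * (k + 9) - 3 = 2 * k + 15 by omega, show 2 * (k + 9) + 3 = 2 * k + 21 by omega]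
  -- `3 ∤ v₂` makes the smallest exponent of the tail `v₂ - 8` rather than `v₂ - 9`.
  exact mem_diffValues_X_pow_six (by omega) <| Finset.dvd_sum fun j hj =>
    (pow_dvd_pow X (by rw [Finset.mem_Icc] at hj; omega)).mul_left _
end

section
/- Let $v_2$ be an integer with $v_2 > 18$ and $3 \nmid v_2$, let $a_j \in \mathbb{C}$ for integers $j$ with $-\lfloor v_2/3 \rfloor - 3 \le j \le -4$, and define $\varphi_1 = T^6$ and $\varphi_2 = T^9 + T^{v_2 - 9} + \sum_{j = -\lfloor v_2/3 \rfloor - 3}^{-4} a_j T^{2 v_2 + 3j}$ in $\mathbb{C}[[T]]$. Then the formal power series $\varphi_2^2 - \varphi_1^3 \in \mathbb{C}[[T]]$ has order exactly $v_2$; more precisely, its coefficient of $T^{v_2}$ equals $2$ and all coefficients of $T^n$ with $n < v_2$ vanish. -/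
open PowerSeries

namespace PowerSeries

variable {R : Type*} [CommRing R]

theorem X_pow_dvd_sum_C_mul_X_pow {ι : Type*} (s : Finset ι) (c : ι → R) (e : ι → ℕ) {m : ℕ}
    (he : ∀ i ∈ s, m ≤ e i) : (X : R⟦X⟧) ^ m ∣ ∑ i ∈ s, C (c i) * X ^ e i :=
  Finset.dvd_sum fun i hi => (pow_dvd_pow X (he i hi)).mul_left _

theorem order_eq_and_coeff_of_X_pow_succ_dvd_sub {f : R⟦X⟧} {c : R} (hc : c ≠ 0) {n : ℕ}
    (h : X ^ (n + 1) ∣ f - C c * X ^ n) :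
    f.order = n ∧ coeff n f = c ∧ ∀ m < n, coeff m f = 0 := by
  have hcoeff : ∀ m ≤ n, coeff m f = if m = n then c else 0 := fun m hm => by
    have := X_pow_dvd_iff.mp h m (Nat.lt_succ_of_le hm)
    rwa [map_sub, coeff_C_mul_X_pow, sub_eq_zero] at this
  have hlow : ∀ m < n, coeff m f = 0 := fun m hm => by
    rw [hcoeff m hm.le, if_neg hm.ne]
  have htop : coeff n f = c := by rw [hcoeff n le_rfl, if_pos rfl]
  exact ⟨order_eq_nat.mpr ⟨htop ▸ hc, hlow⟩, htop, hlow⟩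

/-- Expanding the square, `2 X^n` is the only term of order `≤ n`: the others are
`X^(2n-18)`, `X^9 S`, `X^(n-9) S` and `S²`. -/
theorem X_pow_succ_dvd_sq_sub_cube_sub {n : ℕ} (hn : 18 < n) {S : R⟦X⟧} (hS : X ^ (n - 8) ∣ S) :
    X ^ (n + 1) ∣ (X ^ 9 + X ^ (n - 9) + S) ^ 2 - (X ^ 6) ^ 3 - C 2 * X ^ n := by
  obtain ⟨k, rfl⟩ : ∃ k, n = k + 19 := ⟨n - 19, by omega⟩
  obtain ⟨T, rfl⟩ := hS
  rw [show k + 19 - 9 = k + 10 by omega, show k + 19 - 8 = k + 11 by omega, map_ofNat]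
  exact ⟨X ^ k + 2 * T + 2 * X ^ (k + 1) * T + X ^ (k + 2) * T ^ 2, by ring⟩

end PowerSeries

/-- For `φ₁ = T⁶` and `φ₂ = T⁹ + T^{v₂-9} + ∑_{j=-⌊v₂/3⌋-3}^{-4} aⱼ T^{2v₂+3j}`
with `v₂ > 18` and `3 ∤ v₂`, the series `φ₂² - φ₁³` has order exactly `v₂`: its
coefficient of `T^{v₂}` is `2` and all lower coefficients vanish. -/
theorem order_of_h_along_parameterization (v2 : ℕ) (h18 : 18 < v2) (h3 : ¬ (3 ∣ v2))
    (a : ℤ → ℂ) (φ₁ φ₂ : PowerSeries ℂ)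
    (hφ₁ : φ₁ = PowerSeries.X ^ 6)
    (hφ₂ : φ₂ = PowerSeries.X ^ 9 + PowerSeries.X ^ (v2 - 9) +
      ∑ j ∈ Finset.Icc (-((v2 / 3 : ℕ) : ℤ) - 3) (-4),
        PowerSeries.C (a j) * PowerSeries.X ^ (2 * (v2 : ℤ) + 3 * j).toNat) :
    (φ₂ ^ 2 - φ₁ ^ 3).order = (v2 : ℕ∞) ∧
      PowerSeries.coeff v2 (φ₂ ^ 2 - φ₁ ^ 3) = 2 ∧
      ∀ n : ℕ, n < v2 → PowerSeries.coeff n (φ₂ ^ 2 - φ₁ ^ 3) = 0 := by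
  have hS := X_pow_dvd_sum_C_mul_X_pow (Finset.Icc (-((v2 / 3 : ℕ) : ℤ) - 3) (-4)) a
    (fun j => (2 * (v2 : ℤ) + 3 * j).toNat) (m := v2 - 8) fun j hj => by
      simp only [Finset.mem_Icc] at hj ⊢
      -- `3 ∤ v2` excludes the exponent `v2 - 9`, reached at `j = -v2/3 - 3` when `3 ∣ v2`.
      omega
  subst hφ₁ hφ₂
  exact order_eq_and_coeff_of_X_pow_succ_dvd_sub two_ne_zero
    (X_pow_succ_dvd_sq_sub_cube_sub h18 hS)
end
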